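/- arXiv:2007.00429 — 10 statements merged into one kernel-verified Lean document; each statement's English description precedes it below -/
import Mathlib

section
/- If A ⊆ ℝ^n is a finite set such that the set of nonzero Euclidean distances between distinct points of A has at most s elements, then |A| ≤ C(n+s, s). -/
noncomputable section

/-- The set of nonzero distances determined by a set `A` in Euclidean space. -/
def distSet {n : ℕ} (A : Set (EuclideanSpace ℝ (Fin n))) : Set ℝ :=
  {d | ∃ p ∈ A, ∃ q ∈ A, p ≠ q ∧ dist p q = d}

/-!
Let `μ` be a weight on `A` orthogonal to every monomial of degree `≤ s` restricted to `A`.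
A polynomial `F(p, q)` of total degree `≤ 2s` is a combination of products `f(p) g(q)` of
monomials one of which has degree `≤ s`, so `∑_{a,b} μ_a μ_b F(a, b) = 0`. For
`F = ∏_c (‖p - q‖² - c)`, with `c` running over the at most `s` nonzero squared distances,
only the diagonal survives and gives `F(a, a) ∑_a μ_a² = 0` with `F(a, a) = ∏_c (-c) ≠ 0`.
Hence `μ = 0`: the `C(n+s, s)` monomials of degree `≤ s` span all functions on `A`.
-/

open Finset

section AffineMonomial

variable {σ : Type*}

/-- `none` indexes the constant coordinate `1`, so padding `w` with `none` leaves the value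
unchanged and the monomials of degree `≤ s` are exactly those indexed by `Sym (Option σ) s`. -/
def affineMonomial (w : Multiset (Option σ)) (p : σ → ℝ) : ℝ :=
  (w.map fun o => o.elim 1 p).prod

@[simp]
lemma affineMonomial_zero (p : σ → ℝ) : affineMonomial 0 p = 1 := by
  simp [affineMonomial]

lemma affineMonomial_add (v w : Multiset (Option σ)) (p : σ → ℝ) :
    affineMonomial (v + w) p = affineMonomial v p * affineMonomial w p := by
  simp [affineMonomial]

lemma affineMonomial_add_replicate_none (w : Multiset (Option σ)) (k : ℕ) (p : σ → ℝ) :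
    affineMonomial (w + Multiset.replicate k none) p = affineMonomial w p := by
  simp [affineMonomial]

def biDegreeLE (d : ℕ) : Submodule ℝ ((σ → ℝ) → (σ → ℝ) → ℝ) :=
  Submodule.span ℝ {F | ∃ v w : Multiset (Option σ), v.card + w.card ≤ d ∧
    F = fun p q => affineMonomial v p * affineMonomial w q}

lemma biDegreeLE_mono {d e : ℕ} (h : d ≤ e) : biDegreeLE (σ := σ) d ≤ biDegreeLE e :=
  Submodule.span_mono fun _ ⟨v, w, hvw, hF⟩ => ⟨v, w, hvw.trans h, hF⟩

lemma affineMonomial_mul_mem_biDegreeLE (v w : Multiset (Option σ)) {d : ℕ}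
    (h : v.card + w.card ≤ d) :
    (fun p q => affineMonomial v p * affineMonomial w q) ∈ biDegreeLE d :=
  Submodule.subset_span ⟨v, w, h, rfl⟩

lemma const_mem_biDegreeLE (d : ℕ) (c : ℝ) : (fun _ _ => c) ∈ biDegreeLE (σ := σ) d := by
  convert (biDegreeLE d).smul_mem c (affineMonomial_mul_mem_biDegreeLE 0 0 (Nat.zero_le d)) using 1
  funext p q
  simp

lemma mul_mem_biDegreeLE {d e : ℕ} {F G : (σ → ℝ) → (σ → ℝ) → ℝ}
    (hF : F ∈ biDegreeLE d) (hG : G ∈ biDegreeLE e) : F * G ∈ biDegreeLE (d + e) := by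
  have hle : biDegreeLE (σ := σ) d * biDegreeLE e ≤ biDegreeLE (d + e) := by
    rw [biDegreeLE, biDegreeLE, Submodule.span_mul_span]
    refine Submodule.span_le.mpr ?_
    rintro _ ⟨_, ⟨v, w, hvw, rfl⟩, _, ⟨v', w', hvw', rfl⟩, rfl⟩
    rw [SetLike.mem_coe]
    convert affineMonomial_mul_mem_biDegreeLE (v + v') (w + w') (d := d + e)
      (by simp only [Multiset.card_add]; omega) using 1
    funext p q
    simp only [Pi.mul_apply, affineMonomial_add]
    ring
  exact hle (Submodule.mul_mem_mul hF hG)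

variable [Fintype σ]

lemma sqDist_mem_biDegreeLE :
    (fun p q : σ → ℝ => ∑ i, (p i - q i) ^ 2) ∈ biDegreeLE 2 := by
  have hterm (i : σ) : (fun p q : σ → ℝ => (p i - q i) ^ 2) ∈ biDegreeLE 2 := by
    have hgen (v w : Multiset (Option σ)) (h : v.card + w.card = 2) :=
      affineMonomial_mul_mem_biDegreeLE v w h.le
    convert add_mem (sub_mem (hgen {some i, some i} 0 rfl)
      (Submodule.smul_mem _ (2 : ℝ) (hgen {some i} {some i} rfl))) (hgen 0 {some i, some i} rfl)
      using 1
    funext p q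
    simp only [affineMonomial, Multiset.insert_eq_cons, Multiset.map_cons, Option.elim_some,
      Multiset.map_singleton, Multiset.prod_cons, Multiset.prod_singleton, Multiset.map_zero,
      Multiset.prod_zero, mul_one, one_mul, Pi.add_apply, Pi.sub_apply, Pi.smul_apply, smul_eq_mul]
    ring
  convert Submodule.sum_mem _ fun i (_ : i ∈ univ) => hterm i using 1
  funext p q
  simp only [Finset.sum_apply]

lemma prod_sqDist_sub_mem_biDegreeLE (D : Finset ℝ) :
    (fun p q : σ → ℝ => ∏ c ∈ D, (∑ i, (p i - q i) ^ 2 - c)) ∈ biDegreeLE (2 * #D) := by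
  classical
  induction D using Finset.induction_on with
  | empty => simpa using const_mem_biDegreeLE 0 1
  | insert c D hc ih =>
    rw [card_insert_of_notMem hc, mul_add_one]
    convert mul_mem_biDegreeLE ih (sub_mem sqDist_mem_biDegreeLE (const_mem_biDegreeLE 2 c))
      using 1
    funext p q
    simp [prod_insert hc, mul_comm]

end AffineMonomial

section Annihilator

variable {σ ι : Type*} [Fintype ι] {x : ι → σ → ℝ} {μ : ι → ℝ} {s : ℕ}

lemma sum_sum_mul_eq_zero_of_mem_biDegreeLE
    (hμ : ∀ v : Multiset (Option σ), v.card ≤ s → ∑ a, μ a * affineMonomial v (x a) = 0)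
    {F : (σ → ℝ) → (σ → ℝ) → ℝ} (hF : F ∈ biDegreeLE (2 * s)) :
    ∑ a, ∑ b, μ a * μ b * F (x a) (x b) = 0 := by
  induction hF using Submodule.span_induction with
  | mem F hF =>
    obtain ⟨v, w, hvw, rfl⟩ := hF
    have hsplit : ∑ a, ∑ b, μ a * μ b * (affineMonomial v (x a) * affineMonomial w (x b)) =
        (∑ a, μ a * affineMonomial v (x a)) * ∑ b, μ b * affineMonomial w (x b) := by
      rw [sum_mul_sum]
      exact sum_congr rfl fun a _ => sum_congr rfl fun b _ => by ring
    rw [hsplit]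
    rcases le_total v.card s with hv | hv
    · rw [hμ v hv, zero_mul]
    · rw [hμ w (by omega), mul_zero]
  | zero => simp
  | add F G _ _ hF hG => simp [mul_add, sum_add_distrib, hF, hG]
  | smul c F _ hF => simp [mul_left_comm _ c, ← mul_sum, hF]

variable [Fintype σ]

lemma eq_zero_of_forall_sum_mul_affineMonomial_eq_zero {D : Finset ℝ} (hD0 : 0 ∉ D)
    (hDs : #D ≤ s) (hx : ∀ a b, a ≠ b → ∑ i, (x a i - x b i) ^ 2 ∈ D)
    (hμ : ∀ v : Multiset (Option σ), v.card ≤ s → ∑ a, μ a * affineMonomial v (x a) = 0) :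
    μ = 0 := by
  have hvanish := sum_sum_mul_eq_zero_of_mem_biDegreeLE hμ <|
    biDegreeLE_mono (by omega) (prod_sqDist_sub_mem_biDegreeLE (σ := σ) D)
  have hoff (a b : ι) (hab : a ≠ b) : ∏ c ∈ D, (∑ i, (x a i - x b i) ^ 2 - c) = 0 :=
    prod_eq_zero (hx a b hab) (sub_self _)
  have hdiag : ∏ c ∈ D, -c ≠ 0 :=
    prod_ne_zero_iff.mpr fun c hc => neg_ne_zero.mpr (ne_of_mem_of_not_mem hc hD0)
  have : (∏ c ∈ D, -c) * μ ⬝ᵥ μ = 0 := by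
    rw [← hvanish, dotProduct, mul_sum]
    refine sum_congr rfl fun a _ => ?_
    rw [sum_eq_single a (fun b _ hba => by rw [hoff a b hba.symm, mul_zero]) (by simp)]
    simp only [sub_self, zero_sub, sq, zero_mul, sum_const_zero]
    ring
  exact dotProduct_self_eq_zero.mp ((mul_eq_zero.mp this).resolve_left hdiag)

theorem card_le_choose_of_sqDist_mem {D : Finset ℝ} (hD0 : 0 ∉ D) (hDs : #D ≤ s)
    (hx : ∀ a b, a ≠ b → ∑ i, (x a i - x b i) ^ 2 ∈ D) :
    Fintype.card ι ≤ (Fintype.card σ + s).choose s := by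
  classical
  let M : Matrix (Sym (Option σ) s) ι ℝ := Matrix.of fun w a => affineMonomial w (x a)
  have hinj : Function.Injective M.mulVecLin := by
    refine (injective_iff_map_eq_zero _).mpr fun μ hμ => ?_
    refine eq_zero_of_forall_sum_mul_affineMonomial_eq_zero hD0 hDs hx fun v hv => ?_
    let w : Sym (Option σ) s := ⟨v + Multiset.replicate (s - v.card) none, by simp; omega⟩
    have hw : ∑ a, affineMonomial w (x a) * μ a = 0 := congrFun hμ w
    simpa only [w, Sym.coe_mk, affineMonomial_add_replicate_none, mul_comm] using hw
  have := LinearMap.finrank_le_finrank_of_injective hinj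
  rwa [Module.finrank_fintype_fun_eq_card, Module.finrank_fintype_fun_eq_card,
    Sym.card_sym_eq_choose, Fintype.card_option, add_right_comm, Nat.add_sub_cancel] at this

end Annihilator

theorem card_le_choose_of_forall_dist_mem {σ : Type*} [Fintype σ] {s : ℕ}
    (A : Finset (EuclideanSpace ℝ σ)) (D : Finset ℝ) (hDs : #D ≤ s)
    (hA : ∀ p ∈ A, ∀ q ∈ A, p ≠ q → dist p q ∈ D) :
    #A ≤ (Fintype.card σ + s).choose s := by
  have hsqDist (p q : EuclideanSpace ℝ σ) : ∑ i, (p i - q i) ^ 2 = dist p q ^ 2 := by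
    simp [EuclideanSpace.dist_eq, Real.sq_sqrt (sum_nonneg fun i _ => sq_nonneg _), Real.dist_eq]
  rw [← Fintype.card_coe A]
  refine card_le_choose_of_sqDist_mem (x := fun a : A => (a : EuclideanSpace ℝ σ).ofLp)
    (D := (D.image (· ^ 2)).erase 0) (notMem_erase 0 _)
    (card_erase_le.trans (card_image_le.trans hDs)) fun a b hab => ?_
  have hne : (a : EuclideanSpace ℝ σ) ≠ b := Subtype.coe_injective.ne hab
  rw [hsqDist]
  exact mem_erase.mpr ⟨pow_ne_zero 2 (dist_ne_zero.mpr hne),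
    mem_image_of_mem _ (hA _ a.2 _ b.2 hne)⟩

/-- Bannai–Bannai–Stanton bound for `s`-distance sets in `ℝ^n`. -/
theorem bannai_bannai_stanton {n s : ℕ} (A : Finset (EuclideanSpace ℝ (Fin n)))
    (hA : (distSet (A : Set (EuclideanSpace ℝ (Fin n)))).ncard ≤ s) :
    A.card ≤ (n + s).choose s := by
  have hfin : (distSet (A : Set (EuclideanSpace ℝ (Fin n)))).Finite :=
    (A.finite_toSet.image2 dist A.finite_toSet).subset <| by
      rintro _ ⟨p, hp, q, hq, -, rfl⟩
      exact Set.mem_image2_of_mem hp hq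
  simpa using card_le_choose_of_forall_dist_mem A hfin.toFinset
    ((Set.ncard_eq_toFinset_card _ hfin).symm.trans_le hA)
    fun p hp q hq hpq => hfin.mem_toFinset.mpr ⟨p, hp, q, hq, hpq, rfl⟩

end
end

section
/- Let F ∈ ℝ[x₁,…,xₙ] be a nonzero polynomial of degree d and let s ≥ d. If A ⊆ ℝ^n is a finite s-distance set on which F vanishes, then |A| ≤ C(n+s, n) − C(n+s−d, n). -/
/-!
Let `P_s` be the real polynomials of degree at most `s` in `n` variables, of dimension
`C(n+s, n)`. Restriction to an `s`-distance set `A` maps `P_s` onto all functions on `A`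
(Petrov–Pohoata): if a weight `ν` on `A` is orthogonal to every restriction, take a
univariate `Q` of degree `≤ s` vanishing at the nonzero squared distances of `A` but not at
`0`, and `G(x, y) = Q(|x - y|²)`. Each monomial of `G` is `x^α y^β` with `|α| ≤ s` or
`|β| ≤ s`, so `∑_{a,b} ν_a ν_b G(a, b) = 0`; off the diagonal `G` vanishes on `A`, so this
sum is `Q(0) ∑_a ν_a²`, and `ν = 0`. The kernel of the restriction contains `F · P_{s-d}`,
of dimension `C(n+s-d, n)`.
-/

noncomputable section

open MvPolynomial

def Fin.consSlackEquiv (n k : ℕ) :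
    {f : Fin n → ℕ // ∑ i, f i ≤ k} ≃ {g : Fin (n + 1) → ℕ // ∑ i, g i = k} where
  toFun f := ⟨Fin.cons (k - ∑ i, f.1 i) f.1, by simp [Fin.sum_univ_succ, f.2]⟩
  invFun g := ⟨Fin.tail g.1, by simp [Fin.tail, ← g.2, Fin.sum_univ_succ]⟩
  left_inv f := by simp
  right_inv g := by
    have := g.2
    rw [Fin.sum_univ_succ] at this
    ext i
    refine Fin.cases ?_ (fun j => ?_) i <;> simp [Fin.tail]
    omega

theorem card_finsupp_sum_le_eq_choose (n k : ℕ) :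
    Nat.card {f : Fin n →₀ ℕ | (f.sum fun _ e => e) ≤ k} = (n + k).choose n := by
  have e : {f : Fin n →₀ ℕ | (f.sum fun _ e => e) ≤ k} ≃ Sym (Fin (n + 1)) k :=
    ((Finsupp.equivFunOnFinite.subtypeEquiv fun f => by simp [Finsupp.sum_fintype]).trans
      (Fin.consSlackEquiv n k)).trans (Sym.equivNatSumOfFintype _ k).symm
  rw [Nat.card_congr e, Nat.card_eq_fintype_card, Sym.card_sym_eq_choose, Fintype.card_fin,
    Nat.add_right_comm, Nat.add_sub_cancel, Nat.choose_symm_add]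

theorem finrank_restrictTotalDegree (K : Type*) [Field K] (n k : ℕ) :
    Module.finrank K (restrictTotalDegree (Fin n) K k) = (n + k).choose n := by
  rw [restrictTotalDegree, Module.finrank_eq_nat_card_basis (basisRestrictSupport K _),
    card_finsupp_sum_le_eq_choose]

section CompositionWithPolynomial

variable {R σ : Type*} [CommRing R]

theorem MvPolynomial.totalDegree_polynomial_aeval_le (P : MvPolynomial σ R) (Q : Polynomial R) :
    (Polynomial.aeval P Q).totalDegree ≤ Q.natDegree * P.totalDegree := by
  rw [Polynomial.aeval_eq_sum_range]
  refine (totalDegree_finsetSum _ _).trans (Finset.sup_le fun i hi => ?_)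
  refine (totalDegree_smul_le _ _).trans ((totalDegree_pow _ _).trans ?_)
  exact Nat.mul_le_mul_right _ (Nat.lt_succ_iff.1 (Finset.mem_range.1 hi))

theorem MvPolynomial.eval_polynomial_aeval (g : σ → R) (P : MvPolynomial σ R)
    (Q : Polynomial R) : eval g (Polynomial.aeval P Q) = Q.eval (eval g P) := by
  have hC : (eval g).comp C = RingHom.id R := RingHom.ext eval_C
  rw [Polynomial.aeval_def, Polynomial.hom_eval₂, algebraMap_eq, hC, Polynomial.eval₂_id]

end CompositionWithPolynomial

section DoubleSum

variable {R σ τ : Type*} [CommRing R]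

theorem eval_sumElim_monomial_sumElim (α : σ →₀ ℕ) (β : τ →₀ ℕ) (x : σ → R) (y : τ → R) :
    eval (Sum.elim x y) (monomial (α.sumElim β) 1) =
      eval x (monomial α 1) * eval y (monomial β 1) := by
  simp only [eval_monomial, one_mul, Finsupp.prod_sumElim]
  rfl

theorem sum_sum_mul_eval_sumElim_eq_zero {ι : Type*} [Fintype ι] (x : ι → σ → R) (ν : ι → R)
    {s : ℕ} (hν : ∀ p : MvPolynomial σ R, p.totalDegree ≤ s → ∑ i, ν i * eval (x i) p = 0)
    {G : MvPolynomial (σ ⊕ σ) R} (hG : G.totalDegree ≤ 2 * s) :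
    ∑ i, ∑ j, ν i * ν j * eval (Sum.elim (x i) (x j)) G = 0 := by
  let Φ : MvPolynomial (σ ⊕ σ) R →ₗ[R] R :=
    ∑ i, ∑ j, (ν i * ν j) • (aeval (Sum.elim (x i) (x j))).toLinearMap
  have hΦ : ∀ P, Φ P = ∑ i, ∑ j, ν i * ν j * eval (Sum.elim (x i) (x j)) P := by
    simp [Φ]
  suffices restrictTotalDegree (σ ⊕ σ) R (2 * s) ≤ LinearMap.ker Φ by
    rw [← hΦ]
    exact this ((mem_restrictTotalDegree _ _ _).2 hG)
  rw [restrictTotalDegree, restrictSupport_eq_span, Submodule.span_le]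
  rintro _ ⟨μ, hμ, rfl⟩
  obtain ⟨⟨α, β⟩, rfl⟩ := Finsupp.sumFinsuppEquivProdFinsupp.symm.surjective μ
  simp only [Finsupp.sumFinsuppEquivProdFinsupp_symm_apply] at hμ ⊢
  have hdeg : (α.sum fun _ e => e) + (β.sum fun _ e => e) ≤ 2 * s := by
    rw [Set.mem_ofPred_eq, Finsupp.sum_sumElim] at hμ
    exact hμ
  have hfactor : Φ (monomial (α.sumElim β) 1) =
      (∑ i, ν i * eval (x i) (monomial α 1)) * ∑ j, ν j * eval (x j) (monomial β 1) := by
    simp only [hΦ, eval_sumElim_monomial_sumElim, Finset.sum_mul_sum]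
    exact Finset.sum_congr rfl fun i _ => Finset.sum_congr rfl fun j _ => by ring
  rw [SetLike.mem_coe, LinearMap.mem_ker, hfactor]
  rcases le_or_gt (α.sum fun _ e => e) s with hα | hα
  · rw [hν _ ((totalDegree_monomial_le _ _).trans hα), zero_mul]
  · have hβ : (β.sum fun _ e => e) ≤ s := by omega
    rw [hν (monomial β 1) ((totalDegree_monomial_le _ _).trans hβ), mul_zero]

end DoubleSum

def evalAt {K σ ι : Type*} [CommSemiring K] (x : ι → σ → K) : MvPolynomial σ K →ₗ[K] ι → K :=
  LinearMap.pi fun i => (aeval (x i)).toLinearMap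

@[simp]
theorem evalAt_apply {K σ ι : Type*} [CommSemiring K] (x : ι → σ → K) (p : MvPolynomial σ K)
    (i : ι) : evalAt x p i = eval (x i) p := by
  simp [evalAt]

section LinearAlgebra

variable {K V W : Type*} [Field K] [AddCommGroup V] [Module K V] [AddCommGroup W] [Module K W]

theorem LinearMap.surjective_of_forall_sum_mul_eq_zero {ι : Type*} [Fintype ι] [DecidableEq ι]
    (f : V →ₗ[K] ι → K) (h : ∀ ν : ι → K, (∀ v, ∑ i, ν i * f v i = 0) → ν = 0) :
    Function.Surjective f := by
  rw [← LinearMap.range_eq_top]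
  by_contra hne
  obtain ⟨φ, hφ0, hle⟩ := (LinearMap.range f).exists_le_ker_of_lt_top (lt_top_iff_ne_top.2 hne)
  have hν := h (fun i => φ fun j => if i = j then 1 else 0) fun v => by
    have hv := hle (LinearMap.mem_range_self f v)
    rw [LinearMap.mem_ker, LinearMap.pi_apply_eq_sum_univ] at hv
    simpa only [smul_eq_mul, mul_comm] using hv
  refine hφ0 (LinearMap.ext fun x => ?_)
  rw [LinearMap.pi_apply_eq_sum_univ]
  simp [congrFun hν]

theorem LinearMap.finrank_add_finrank_le_of_range_le_ker {U : Type*} [AddCommGroup U]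
    [Module K U] [FiniteDimensional K V] {f : V →ₗ[K] W} {g : U →ₗ[K] V}
    (hf : Function.Surjective f) (hg : Function.Injective g)
    (hgf : LinearMap.range g ≤ LinearMap.ker f) :
    Module.finrank K W + Module.finrank K U ≤ Module.finrank K V := by
  rw [← f.finrank_range_add_finrank_ker, LinearMap.range_eq_top.2 hf, finrank_top,
    ← LinearMap.finrank_range_of_inj hg]
  exact Nat.add_le_add_left (Submodule.finrank_mono hgf) _

end LinearAlgebra

section SquaredDistance

variable (ι : Type*) [Fintype ι]

def sqDistPoly : MvPolynomial (ι ⊕ ι) ℝ :=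
  ∑ i, (X (Sum.inl i) - X (Sum.inr i)) ^ 2

theorem totalDegree_sqDistPoly_le : (sqDistPoly ι).totalDegree ≤ 2 := by
  refine (totalDegree_finsetSum _ _).trans (Finset.sup_le fun i _ => ?_)
  refine (totalDegree_pow _ _).trans ?_
  have := (totalDegree_sub (X (Sum.inl i)) (X (Sum.inr i) : MvPolynomial (ι ⊕ ι) ℝ)).trans
    (by rw [totalDegree_X, totalDegree_X, max_self])
  omega

variable {ι}

theorem eval_sqDistPoly (v w : EuclideanSpace ℝ ι) :
    eval (Sum.elim (fun i => v i) (fun i => w i)) (sqDistPoly ι) = dist v w ^ 2 := by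
  rw [EuclideanSpace.dist_eq, Real.sq_sqrt (by positivity)]
  simp [sqDistPoly, Real.dist_eq, sq_abs]

end SquaredDistance

section DistanceSets

variable {n s : ℕ} {A : Finset (EuclideanSpace ℝ (Fin n))}

theorem exists_polynomial_eval_sq_dist_eq_zero
    (hA : (distSet (A : Set (EuclideanSpace ℝ (Fin n)))).ncard ≤ s) :
    ∃ Q : Polynomial ℝ, Q.natDegree ≤ s ∧ Q.eval 0 ≠ 0 ∧
      ∀ a ∈ A, ∀ b ∈ A, a ≠ b → Q.eval (dist a b ^ 2) = 0 := by
  have hfin : (distSet (A : Set (EuclideanSpace ℝ (Fin n)))).Finite :=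
    (A.finite_toSet.image2 dist A.finite_toSet).subset fun _ ⟨p, hp, q, hq, _, hpq⟩ =>
      ⟨p, hp, q, hq, hpq⟩
  refine ⟨∏ t ∈ hfin.toFinset, (Polynomial.X - Polynomial.C (t ^ 2)), ?_, ?_, ?_⟩
  · rw [Polynomial.natDegree_finsetProd_X_sub_C_eq_card, ← Set.ncard_eq_toFinset_card _ hfin]
    exact hA
  · simp only [Polynomial.eval_prod, Polynomial.eval_sub, Polynomial.eval_X, Polynomial.eval_C,
      zero_sub, Finset.prod_ne_zero_iff, neg_ne_zero, Set.Finite.mem_toFinset]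
    rintro _ ⟨p, -, q, -, hpq, rfl⟩
    exact pow_ne_zero 2 (dist_ne_zero.2 hpq)
  · intro a ha b hb hab
    rw [Polynomial.eval_prod]
    exact Finset.prod_eq_zero (hfin.mem_toFinset.2 ⟨a, ha, b, hb, hab, rfl⟩) (by simp)

theorem eq_zero_of_forall_sum_mul_eval_eq_zero
    (hA : (distSet (A : Set (EuclideanSpace ℝ (Fin n)))).ncard ≤ s) (ν : A → ℝ)
    (hν : ∀ p : MvPolynomial (Fin n) ℝ, p.totalDegree ≤ s →
      ∑ a : A, ν a * eval (fun i => (a : EuclideanSpace ℝ (Fin n)) i) p = 0) :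
    ν = 0 := by
  obtain ⟨Q, hQdeg, hQ0, hQ⟩ := exists_polynomial_eval_sq_dist_eq_zero hA
  set G := Polynomial.aeval (sqDistPoly (Fin n)) Q
  have hGeval (v w : EuclideanSpace ℝ (Fin n)) :
      eval (Sum.elim (fun i => v i) (fun i => w i)) G = Q.eval (dist v w ^ 2) := by
    rw [eval_polynomial_aeval, eval_sqDistPoly]
  have hGdeg : G.totalDegree ≤ 2 * s :=
    (totalDegree_polynomial_aeval_le _ _).trans
      (by nlinarith [totalDegree_sqDistPoly_le (Fin n)])
  have hdouble := sum_sum_mul_eval_sumElim_eq_zero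
    (fun (a : A) i => (a : EuclideanSpace ℝ (Fin n)) i) ν hν hGdeg
  have hdiag : ∑ a : A, ∑ b : A, ν a * ν b *
      eval (Sum.elim (fun i => (a : EuclideanSpace ℝ (Fin n)) i)
        (fun i => (b : EuclideanSpace ℝ (Fin n)) i)) G = Q.eval 0 * ∑ a : A, ν a ^ 2 := by
    rw [Finset.mul_sum]
    refine Finset.sum_congr rfl fun a _ =>
      (Finset.sum_eq_single a (fun b _ hba => ?_) (by simp)).trans ?_
    · rw [hGeval, hQ _ a.2 _ b.2 (Subtype.coe_injective.ne hba.symm), mul_zero]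
    · rw [hGeval, dist_self, zero_pow two_ne_zero]
      ring
  have hsq : ∑ a : A, ν a ^ 2 = 0 := (mul_eq_zero.1 (hdiag ▸ hdouble)).resolve_left hQ0
  funext a
  exact pow_eq_zero_iff two_ne_zero |>.1 <|
    (Finset.sum_eq_zero_iff_of_nonneg fun b _ => sq_nonneg (ν b)).1 hsq a (Finset.mem_univ a)

theorem surjective_evalAt_domRestrict_restrictTotalDegree
    (hA : (distSet (A : Set (EuclideanSpace ℝ (Fin n)))).ncard ≤ s) :
    Function.Surjective ((evalAt fun (a : A) i => (a : EuclideanSpace ℝ (Fin n)) i).domRestrict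
      (restrictTotalDegree (Fin n) ℝ s)) := by
  classical
  refine LinearMap.surjective_of_forall_sum_mul_eq_zero _ fun ν hν =>
    eq_zero_of_forall_sum_mul_eval_eq_zero hA ν fun p hp => ?_
  simpa using hν ⟨p, (mem_restrictTotalDegree _ _ _).2 hp⟩

end DistanceSets

/-- Bound for `s`-distance sets on the zero set of a polynomial of degree `d ≤ s`. -/
theorem sdist_on_hypersurface {n s d : ℕ} (F : MvPolynomial (Fin n) ℝ)
    (hF0 : F ≠ 0) (hFd : F.totalDegree = d) (hsd : d ≤ s)
    (A : Finset (EuclideanSpace ℝ (Fin n)))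
    (hA : (distSet (A : Set (EuclideanSpace ℝ (Fin n)))).ncard ≤ s)
    (hvan : ∀ a ∈ A, eval (fun i => a i) F = 0) :
    A.card ≤ (n + s).choose n - (n + s - d).choose n := by
  let mulF := (LinearMap.mulLeft ℝ F).restrict (p := restrictTotalDegree (Fin n) ℝ (s - d))
    (q := restrictTotalDegree (Fin n) ℝ s) fun g hg => by
      rw [mem_restrictTotalDegree] at hg
      rw [mem_restrictTotalDegree, LinearMap.mulLeft_apply]
      have := totalDegree_mul F g
      omega
  have hmulF : Function.Injective mulF := fun g h hgh =>
    Subtype.ext (mul_left_cancel₀ hF0 (congrArg Subtype.val hgh))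
  have hvanish : LinearMap.range mulF ≤ LinearMap.ker
      ((evalAt fun (a : A) i => (a : EuclideanSpace ℝ (Fin n)) i).domRestrict
        (restrictTotalDegree (Fin n) ℝ s)) := by
    rintro _ ⟨g, rfl⟩
    ext a
    simp [mulF, hvan _ a.2]
  have key := LinearMap.finrank_add_finrank_le_of_range_le_ker
    (surjective_evalAt_domRestrict_restrictTotalDegree hA) hmulF hvanish
  rw [Module.finrank_fintype_fun_eq_card, Fintype.card_coe, finrank_restrictTotalDegree,
    finrank_restrictTotalDegree, ← Nat.add_sub_assoc hsd] at key
  omega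
end
end

section
/- Let F ∈ ℝ[x, y] define a plane curve of degree d, and let s ≥ d. If A ⊆ ℝ² is a finite s-distance set contained in the zero set of F, then |A| ≤ ds − d(d−3)/2. -/
noncomputable section

open MvPolynomial

open Finset


/-- Monomial exponent finset: pairs (i,j) with i+j ≤ n. -/
def bx (n : ℕ) : Finset (ℕ × ℕ) :=
  ((Finset.range (n+1)) ×ˢ (Finset.range (n+1))).filter (fun p => p.1 + p.2 ≤ n)

lemma mem_bx {n : ℕ} {p : ℕ × ℕ} : p ∈ bx n ↔ p.1 + p.2 ≤ n := by
  unfold bx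
  simp only [Finset.mem_filter, Finset.mem_product, Finset.mem_range]
  omega

lemma bx_succ (n : ℕ) :
    bx (n+1) = bx n ∪ (Finset.range (n+2)).image (fun i => (i, n+1-i)) := by
  ext p
  simp only [mem_bx, Finset.mem_union, Finset.mem_image, Finset.mem_range]
  constructor
  · intro h
    rcases Nat.lt_or_ge (p.1 + p.2) (n+1) with h'|h'
    · left; omega
    · right; refine ⟨p.1, by omega, ?_⟩
      rw [Prod.ext_iff]; constructor
      · rfl
      · simp; omega
  · rintro (h | ⟨i, hi, rfl⟩)
    · omega
    · show i + (n+1-i) ≤ n+1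
      omega

lemma card_bx (n : ℕ) : (bx n).card * 2 = (n+1) * (n+2) := by
  induction n with
  | zero => decide
  | succ n ih =>
    rw [bx_succ, Finset.card_union_of_disjoint, Finset.card_image_of_injective,
      Finset.card_range]
    · have h2 : (Finset.card (bx n) + (n+2)) * 2 = Finset.card (bx n) * 2 + (n+2)*2 := by ring
      rw [h2, ih]; ring
    · intro a b hab
      have := congrArg Prod.fst hab; simpa using this
    · rw [Finset.disjoint_right]
      rintro p hp hp'
      rw [mem_bx] at hp'
      simp only [Finset.mem_image, Finset.mem_range] at hp
      obtain ⟨i, hi, rfl⟩ := hp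
      simp at hp'
      omega

/-- Pair to monomial exponent. -/
def mon (p : ℕ × ℕ) : Fin 2 →₀ ℕ := Finsupp.single 0 p.1 + Finsupp.single 1 p.2

@[simp] lemma mon_apply_zero (p : ℕ × ℕ) : mon p 0 = p.1 := by
  simp [mon, Finsupp.single_apply]

@[simp] lemma mon_apply_one (p : ℕ × ℕ) : mon p 1 = p.2 := by
  simp [mon, Finsupp.single_apply]

lemma mon_injective : Function.Injective mon := by
  intro p q h
  have h0 := congrArg (fun f : Fin 2 →₀ ℕ => f 0) h
  have h1 := congrArg (fun f : Fin 2 →₀ ℕ => f 1) h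
  simp at h0 h1
  exact Prod.ext h0 h1

lemma eq_mon (d : Fin 2 →₀ ℕ) : d = mon (d 0, d 1) := by
  ext i
  fin_cases i <;> simp

lemma sum_eq_apply (d : Fin 2 →₀ ℕ) : (d.sum fun _ e => e) = d 0 + d 1 := by
  rw [Finsupp.sum_fintype]
  · rw [Fin.sum_univ_two]
  · intro i; rfl

/-- Evaluation of a polynomial of total degree ≤ s as a sum over the box. -/
lemma mon_sum (p : ℕ × ℕ) : ((mon p).sum fun _ e => e) = p.1 + p.2 := by
  rw [sum_eq_apply]; simp

lemma eval_bx {s : ℕ} (P : MvPolynomial (Fin 2) ℝ) (hP : P.totalDegree ≤ s)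
    (a : EuclideanSpace ℝ (Fin 2)) :
    eval (fun i => a i) P
      = ∑ p ∈ bx s, MvPolynomial.coeff (mon p) P * (a 0) ^ p.1 * (a 1) ^ p.2 := by
  rw [MvPolynomial.eval_eq']
  have himg : ∑ p ∈ bx s, MvPolynomial.coeff (mon p) P * (a 0) ^ p.1 * (a 1) ^ p.2
      = ∑ d ∈ (bx s).image mon, MvPolynomial.coeff d P * (a 0) ^ (d 0) * (a 1) ^ (d 1) := by
    rw [Finset.sum_image (fun x _ y _ h => mon_injective h)]
    simp
  rw [himg]
  have hsub : P.support ⊆ (bx s).image mon := by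
    intro d hd
    have hle : (d.sum fun _ e => e) ≤ s := le_trans (MvPolynomial.le_totalDegree hd) hP
    rw [sum_eq_apply] at hle
    rw [Finset.mem_image]
    exact ⟨(d 0, d 1), mem_bx.mpr hle, (eq_mon d).symm⟩
  rw [Finset.sum_subset hsub]
  · refine Finset.sum_congr rfl (fun d _ => ?_)
    rw [Fin.prod_univ_two]
    ring
  · intro d _ hd
    rw [MvPolynomial.notMem_support_iff.mp hd]
    ring

open Complex in
/-- Complex moments vanish, given vanishing real moments. -/
lemma complex_moments {s : ℕ} (A : Finset (EuclideanSpace ℝ (Fin 2))) (lam : EuclideanSpace ℝ (Fin 2) → ℝ)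
    (hm : ∀ i j : ℕ, i + j ≤ s → ∑ a ∈ A, lam a * (a 0) ^ i * (a 1) ^ j = 0)
    (p q : ℕ) (hpq : p + q ≤ s) :
    ∑ a ∈ A, (lam a : ℂ) * ((a 0 : ℂ) + (a 1 : ℂ) * Complex.I) ^ p
        * ((a 0 : ℂ) - (a 1 : ℂ) * Complex.I) ^ q = 0 := by
  have hmC : ∀ i j : ℕ, i + j ≤ s → ∑ a ∈ A, (lam a : ℂ) * (a 0 : ℂ) ^ i * (a 1 : ℂ) ^ j = 0 := by
    intro i j hij
    have := hm i j hij
    have h2 := congrArg (fun r : ℝ => (r : ℂ)) this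
    push_cast at h2
    simpa using h2
  calc ∑ a ∈ A, (lam a : ℂ) * ((a 0 : ℂ) + (a 1 : ℂ) * Complex.I) ^ p
        * ((a 0 : ℂ) - (a 1 : ℂ) * Complex.I) ^ q
      = ∑ a ∈ A, ∑ i ∈ Finset.range (p+1), ∑ j ∈ Finset.range (q+1),
          ((p.choose i : ℂ) * (q.choose j : ℂ) * (-1)^(j+q) * Complex.I^(p-i) * Complex.I^(q-j))
            * ((lam a : ℂ) * (a 0 : ℂ)^(i+j) * (a 1 : ℂ)^((p-i)+(q-j))) := by
        refine Finset.sum_congr rfl fun a _ => ?_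
        rw [add_pow, sub_pow]
        simp only [Finset.mul_sum, Finset.sum_mul]
        rw [Finset.sum_comm]
        refine Finset.sum_congr rfl fun i hi => Finset.sum_congr rfl fun j hj => ?_
        rw [mul_pow, mul_pow, pow_add, pow_add]
        ring
    _ = ∑ i ∈ Finset.range (p+1), ∑ j ∈ Finset.range (q+1),
          ((p.choose i : ℂ) * (q.choose j : ℂ) * (-1)^(j+q) * Complex.I^(p-i) * Complex.I^(q-j))
            * ∑ a ∈ A, ((lam a : ℂ) * (a 0 : ℂ)^(i+j) * (a 1 : ℂ)^((p-i)+(q-j))) := by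
        rw [Finset.sum_comm]
        refine Finset.sum_congr rfl fun i hi => ?_
        rw [Finset.sum_comm]
        refine Finset.sum_congr rfl fun j hj => ?_
        rw [Finset.mul_sum]
    _ = 0 := by
        refine Finset.sum_eq_zero fun i hi => Finset.sum_eq_zero fun j hj => ?_
        rw [Finset.mem_range] at hi hj
        rw [hmC (i+j) ((p-i)+(q-j)) (by omega), mul_zero]

/-- Complex coordinates. -/
def zc (a : EuclideanSpace ℝ (Fin 2)) : ℂ := (a 0 : ℂ) + (a 1 : ℂ) * Complex.I
def wc (a : EuclideanSpace ℝ (Fin 2)) : ℂ := (a 0 : ℂ) - (a 1 : ℂ) * Complex.I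

lemma factor_sum {α : Type*} (A : Finset α) (c : ℂ) (f g : α → ℂ) :
    ∑ a ∈ A, ∑ b ∈ A, c * f a * g b = c * (∑ a ∈ A, f a) * (∑ b ∈ A, g b) := by
  rw [mul_assoc, Finset.sum_mul_sum, Finset.mul_sum]
  refine Finset.sum_congr rfl fun a _ => ?_
  rw [Finset.mul_sum]
  refine Finset.sum_congr rfl fun b _ => ?_
  ring

lemma swap22 {α γ M : Type*} [AddCommMonoid M] (A B : Finset α) (I J : Finset γ)
    (f : α → α → γ → γ → M) :
    ∑ a ∈ A, ∑ b ∈ B, ∑ i ∈ I, ∑ j ∈ J, f a b i j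
      = ∑ i ∈ I, ∑ j ∈ J, ∑ a ∈ A, ∑ b ∈ B, f a b i j :=
  calc ∑ a ∈ A, ∑ b ∈ B, ∑ i ∈ I, ∑ j ∈ J, f a b i j
      = ∑ a ∈ A, ∑ i ∈ I, ∑ b ∈ B, ∑ j ∈ J, f a b i j :=
        Finset.sum_congr rfl fun a _ => Finset.sum_comm
    _ = ∑ i ∈ I, ∑ a ∈ A, ∑ b ∈ B, ∑ j ∈ J, f a b i j := Finset.sum_comm
    _ = ∑ i ∈ I, ∑ a ∈ A, ∑ j ∈ J, ∑ b ∈ B, f a b i j :=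
        Finset.sum_congr rfl fun i _ => Finset.sum_congr rfl fun a _ => Finset.sum_comm
    _ = ∑ i ∈ I, ∑ j ∈ J, ∑ a ∈ A, ∑ b ∈ B, f a b i j :=
        Finset.sum_congr rfl fun i _ => Finset.sum_comm

lemma swap3 {α γ M : Type*} [AddCommMonoid M] (A B : Finset α) (I : Finset γ)
    (f : α → α → γ → M) :
    ∑ a ∈ A, ∑ b ∈ B, ∑ i ∈ I, f a b i = ∑ i ∈ I, ∑ a ∈ A, ∑ b ∈ B, f a b i :=
  calc ∑ a ∈ A, ∑ b ∈ B, ∑ i ∈ I, f a b i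
      = ∑ a ∈ A, ∑ i ∈ I, ∑ b ∈ B, f a b i :=
        Finset.sum_congr rfl fun a _ => Finset.sum_comm
    _ = ∑ i ∈ I, ∑ a ∈ A, ∑ b ∈ B, f a b i := Finset.sum_comm

lemma Tk_zero {s : ℕ} (A : Finset (EuclideanSpace ℝ (Fin 2))) (lam : EuclideanSpace ℝ (Fin 2) → ℝ)
    (hm : ∀ i j : ℕ, i + j ≤ s → ∑ a ∈ A, lam a * (a 0) ^ i * (a 1) ^ j = 0)
    (k : ℕ) (hk : k ≤ s) :
    ∑ a ∈ A, ∑ b ∈ A, (lam a : ℂ) * (lam b : ℂ) * ((zc a - zc b) * (wc a - wc b)) ^ k = 0 := by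
  have hM : ∀ p q : ℕ, p + q ≤ s → ∑ a ∈ A, (lam a : ℂ) * (zc a) ^ p * (wc a) ^ q = 0 :=
    fun p q h => complex_moments A lam hm p q h
  calc ∑ a ∈ A, ∑ b ∈ A, (lam a : ℂ) * (lam b : ℂ) * ((zc a - zc b) * (wc a - wc b)) ^ k
      = ∑ a ∈ A, ∑ b ∈ A, ∑ i ∈ Finset.range (k+1), ∑ j ∈ Finset.range (k+1),
          ((-1 : ℂ)^(i+k) * (-1 : ℂ)^(j+k) * (k.choose i : ℂ) * (k.choose j : ℂ))
            * ((lam a : ℂ) * (zc a)^i * (wc a)^j)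
            * ((lam b : ℂ) * (zc b)^(k-i) * (wc b)^(k-j)) := by
        refine Finset.sum_congr rfl fun a _ => Finset.sum_congr rfl fun b _ => ?_
        rw [mul_pow, sub_pow, sub_pow]
        simp only [Finset.mul_sum, Finset.sum_mul]
        rw [Finset.sum_comm]
        refine Finset.sum_congr rfl fun i hi => Finset.sum_congr rfl fun j hj => ?_
        ring
    _ = ∑ i ∈ Finset.range (k+1), ∑ j ∈ Finset.range (k+1),
          ((-1 : ℂ)^(i+k) * (-1 : ℂ)^(j+k) * (k.choose i : ℂ) * (k.choose j : ℂ))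
            * (∑ a ∈ A, (lam a : ℂ) * (zc a)^i * (wc a)^j)
            * (∑ b ∈ A, (lam b : ℂ) * (zc b)^(k-i) * (wc b)^(k-j)) := by
        rw [swap22]
        exact Finset.sum_congr rfl fun i _ => Finset.sum_congr rfl fun j _ => factor_sum ..
    _ = 0 := by
        refine Finset.sum_eq_zero fun i hi => Finset.sum_eq_zero fun j hj => ?_
        rw [Finset.mem_range] at hi hj
        rcases le_or_gt (i + j) s with h | h
        · rw [hM i j h]; ring
        · rw [hM (k-i) (k-j) (by omega)]; ring

lemma dist_sq_eq (a b : EuclideanSpace ℝ (Fin 2)) :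
    ((dist a b : ℝ) : ℂ) ^ 2 = (zc a - zc b) * (wc a - wc b) := by
  have h : (dist a b : ℝ) ^ 2 = (a 0 - b 0) ^ 2 + (a 1 - b 1) ^ 2 := by
    rw [EuclideanSpace.dist_eq]
    rw [Real.sq_sqrt (Finset.sum_nonneg fun i _ => sq_nonneg _)]
    rw [Fin.sum_univ_two]
    simp [Real.dist_eq, sq_abs]
  have h2 := congrArg (fun r : ℝ => (r : ℂ)) h
  push_cast at h2
  rw [h2]
  simp only [zc, wc]
  have hI := Complex.I_sq
  ring_nf
  rw [Complex.I_sq]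
  ring

/-- The key injectivity: vanishing of all moments of degree ≤ s forces lam = 0,
for an s-distance set. -/
lemma moments_injective {s : ℕ} (A : Finset (EuclideanSpace ℝ (Fin 2)))
    (hA : (distSet (A : Set (EuclideanSpace ℝ (Fin 2)))).ncard ≤ s)
    (lam : EuclideanSpace ℝ (Fin 2) → ℝ)
    (hm : ∀ i j : ℕ, i + j ≤ s → ∑ a ∈ A, lam a * (a 0) ^ i * (a 1) ^ j = 0) :
    ∀ a ∈ A, lam a = 0 := by
  classical
  -- the distance set is finite
  have hfin : (distSet (A : Set (EuclideanSpace ℝ (Fin 2)))).Finite := by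
    apply Set.Finite.subset (Set.Finite.image2 (fun p q => dist p q) A.finite_toSet A.finite_toSet)
    rintro t ⟨p, hp, q, hq, hpq, rfl⟩
    exact Set.mem_image2_of_mem hp hq
  set D : Finset ℝ := hfin.toFinset with hD
  have hDcard : D.card ≤ s := by
    rwa [hD, ← Set.ncard_eq_toFinset_card _ hfin]
  have hD0 : ∀ t ∈ D, t ≠ 0 := by
    intro t ht
    rw [hD, Set.Finite.mem_toFinset] at ht
    obtain ⟨p, hp, q, hq, hpq, rfl⟩ := ht
    exact ne_of_gt (dist_pos.mpr hpq)
  have hDmem : ∀ a ∈ A, ∀ b ∈ A, a ≠ b → dist a b ∈ D := by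
    intro a ha b hb hab
    rw [hD, Set.Finite.mem_toFinset]
    exact ⟨a, ha, b, hb, hab, rfl⟩
  -- the one-variable polynomial with roots t²
  set P : Polynomial ℂ := ∏ t ∈ D, (Polynomial.X - Polynomial.C ((t : ℂ) ^ 2)) with hP
  have hPdeg : P.natDegree ≤ s := by
    rw [hP, Polynomial.natDegree_prod _ _ (fun t _ => Polynomial.X_sub_C_ne_zero _)]
    simp only [Polynomial.natDegree_X_sub_C]
    simpa using hDcard
  have hc0 : P.eval 0 ≠ 0 := by
    rw [hP, Polynomial.eval_prod]
    rw [Finset.prod_ne_zero_iff]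
    intro t ht
    simp only [Polynomial.eval_sub, Polynomial.eval_X, Polynomial.eval_C, zero_sub, neg_ne_zero]
    exact pow_ne_zero _ (by exact_mod_cast hD0 t ht)
  -- the double sum S
  have hS0 : ∑ a ∈ A, ∑ b ∈ A,
      (lam a : ℂ) * (lam b : ℂ) * P.eval ((zc a - zc b) * (wc a - wc b)) = 0 := by
    calc ∑ a ∈ A, ∑ b ∈ A, (lam a : ℂ) * (lam b : ℂ) * P.eval ((zc a - zc b) * (wc a - wc b))
        = ∑ a ∈ A, ∑ b ∈ A, ∑ k ∈ Finset.range (P.natDegree + 1),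
            P.coeff k * ((lam a : ℂ) * (lam b : ℂ) * ((zc a - zc b) * (wc a - wc b)) ^ k) := by
          refine Finset.sum_congr rfl fun a _ => Finset.sum_congr rfl fun b _ => ?_
          rw [Polynomial.eval_eq_sum_range, Finset.mul_sum]
          refine Finset.sum_congr rfl fun k _ => ?_
          ring
      _ = ∑ k ∈ Finset.range (P.natDegree + 1), P.coeff k *
            (∑ a ∈ A, ∑ b ∈ A, (lam a : ℂ) * (lam b : ℂ) * ((zc a - zc b) * (wc a - wc b)) ^ k) := by
          rw [swap3]
          refine Finset.sum_congr rfl fun k _ => ?_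
          rw [Finset.mul_sum]
          refine Finset.sum_congr rfl fun a _ => ?_
          rw [Finset.mul_sum]
      _ = 0 := by
          refine Finset.sum_eq_zero fun k hk => ?_
          rw [Finset.mem_range] at hk
          rw [Tk_zero A lam hm k (by omega), mul_zero]
  -- compute S as a diagonal sum
  have hSdiag : ∑ a ∈ A, ∑ b ∈ A,
      (lam a : ℂ) * (lam b : ℂ) * P.eval ((zc a - zc b) * (wc a - wc b))
        = (∑ a ∈ A, (lam a : ℂ) ^ 2) * P.eval 0 := by
    rw [Finset.sum_mul]
    refine Finset.sum_congr rfl fun a ha => ?_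
    rw [Finset.sum_eq_single_of_mem a ha]
    · simp only [zc, wc, sub_self, mul_zero, zero_mul]
      ring_nf
    · intro b hb hba
      have hdist : dist a b ∈ D := hDmem a ha b hb (Ne.symm hba)
      rw [← dist_sq_eq, hP, Polynomial.eval_prod]
      rw [Finset.prod_eq_zero hdist]
      · ring
      · simp
  -- conclude
  have hz : (∑ a ∈ A, (lam a : ℂ) ^ 2) * P.eval 0 = 0 := by rw [← hSdiag, hS0]
  have hz2 : ∑ a ∈ A, (lam a : ℂ) ^ 2 = 0 := by
    rcases mul_eq_zero.mp hz with h | h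
    · exact h
    · exact absurd h hc0
  have hz3 : ∑ a ∈ A, (lam a) ^ 2 = 0 := by
    have : ((∑ a ∈ A, (lam a) ^ 2 : ℝ) : ℂ) = 0 := by push_cast; exact hz2
    exact_mod_cast this
  intro a ha
  have := (Finset.sum_eq_zero_iff_of_nonneg (fun b _ => sq_nonneg (lam b))).mp hz3 a ha
  exact pow_eq_zero_iff (by norm_num) |>.mp this


/-- The moment map. -/
def psiMap (s : ℕ) (A : Finset (EuclideanSpace ℝ (Fin 2))) :
    (↥A → ℝ) →ₗ[ℝ] (↥(bx s) → ℝ) where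
  toFun := fun l p => ∑ a ∈ A.attach,
    l a * ((a : EuclideanSpace ℝ (Fin 2)) 0) ^ (p : ℕ × ℕ).1
        * ((a : EuclideanSpace ℝ (Fin 2)) 1) ^ (p : ℕ × ℕ).2
  map_add' := by
    intro l l'; funext p
    simp [add_mul, Finset.sum_add_distrib]
  map_smul' := by
    intro c l; funext p
    simp only [Pi.smul_apply, smul_eq_mul, RingHom.id_apply, Finset.mul_sum]
    exact Finset.sum_congr rfl fun a _ => by ring

@[simp] lemma psiMap_apply (s : ℕ) (A : Finset (EuclideanSpace ℝ (Fin 2))) (l : ↥A → ℝ)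
    (p : ↥(bx s)) : psiMap s A l p = ∑ a ∈ A.attach,
      l a * ((a : EuclideanSpace ℝ (Fin 2)) 0) ^ (p : ℕ × ℕ).1
          * ((a : EuclideanSpace ℝ (Fin 2)) 1) ^ (p : ℕ × ℕ).2 := rfl

/-- The polynomial with coefficients `μ` on the monomials of `bx r`. -/
def gPoly (r : ℕ) (μ : ↥(bx r) → ℝ) : MvPolynomial (Fin 2) ℝ :=
  ∑ q ∈ (bx r).attach, monomial (mon (q : ℕ × ℕ)) (μ q)

lemma gPoly_totalDegree (r : ℕ) (μ : ↥(bx r) → ℝ) : (gPoly r μ).totalDegree ≤ r := by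
  refine MvPolynomial.totalDegree_finsetSum_le (fun q _ => ?_)
  refine le_trans (MvPolynomial.totalDegree_monomial_le _ _)
    (le_of_eq_of_le ?_ (mem_bx.mp q.2))
  exact mon_sum _

lemma gPoly_coeff (r : ℕ) (μ : ↥(bx r) → ℝ) (q : ↥(bx r)) :
    MvPolynomial.coeff (mon (q : ℕ × ℕ)) (gPoly r μ) = μ q := by
  rw [gPoly, MvPolynomial.coeff_sum]
  rw [Finset.sum_eq_single_of_mem q (Finset.mem_attach _ _)]
  · rw [MvPolynomial.coeff_monomial, if_pos rfl]
  · intro q' _ hq'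
    rw [MvPolynomial.coeff_monomial, if_neg]
    intro h
    exact hq' (Subtype.ext (mon_injective h))

/-- The multiplication-by-F coefficient map. -/
def thetaMap (F : MvPolynomial (Fin 2) ℝ) (r s : ℕ) :
    (↥(bx r) → ℝ) →ₗ[ℝ] (↥(bx s) → ℝ) where
  toFun := fun μ p => MvPolynomial.coeff (mon (p : ℕ × ℕ)) (F * gPoly r μ)
  map_add' := by
    intro μ ν; funext p
    have : gPoly r (μ + ν) = gPoly r μ + gPoly r ν := by
      rw [gPoly, gPoly, gPoly, ← Finset.sum_add_distrib]
      exact Finset.sum_congr rfl fun q _ => by rw [Pi.add_apply, map_add]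
    simp [this, mul_add, MvPolynomial.coeff_add]
  map_smul' := by
    intro c μ; funext p
    have : gPoly r (c • μ) = c • gPoly r μ := by
      rw [gPoly, gPoly, Finset.smul_sum]
      exact Finset.sum_congr rfl fun q _ => by
        simp [MvPolynomial.smul_monomial]
    simp [this, MvPolynomial.coeff_smul]

@[simp] lemma thetaMap_apply (F : MvPolynomial (Fin 2) ℝ) (r s : ℕ) (μ : ↥(bx r) → ℝ)
    (p : ↥(bx s)) :
    thetaMap F r s μ p = MvPolynomial.coeff (mon (p : ℕ × ℕ)) (F * gPoly r μ) := rfl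

/-- Bound for `s`-distance sets on a plane curve of degree `d ≤ s`:
`|A| ≤ ds − d(d−3)/2`. -/
theorem sdist_on_plane_curve {s d : ℕ} (F : MvPolynomial (Fin 2) ℝ)
    (hF0 : F ≠ 0) (hFd : F.totalDegree = d) (hsd : d ≤ s)
    (A : Finset (EuclideanSpace ℝ (Fin 2)))
    (hA : (distSet (A : Set (EuclideanSpace ℝ (Fin 2)))).ncard ≤ s)
    (hvan : ∀ a ∈ A, eval (fun i => a i) F = 0) :
    (A.card : ℚ) ≤ (d : ℚ) * s - d * (d - 3) / 2 := by
  classical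
  set r := s - d with hr
  have hFGdeg : ∀ μ : ↥(bx r) → ℝ, (F * gPoly r μ).totalDegree ≤ s := by
    intro μ
    refine le_trans (MvPolynomial.totalDegree_mul F (gPoly r μ)) ?_
    rw [hFd]
    have := gPoly_totalDegree r μ
    omega
  -- orthogonality of the ranges
  have horth : ∀ (l : ↥A → ℝ) (μ : ↥(bx r) → ℝ),
      ∑ p ∈ (bx s).attach, psiMap s A l p * thetaMap F r s μ p = 0 := by
    intro l μ
    have hswap : ∑ p ∈ (bx s).attach, psiMap s A l p * thetaMap F r s μ p
        = ∑ a ∈ A.attach, l a *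
            eval (fun i => (a : EuclideanSpace ℝ (Fin 2)) i) (F * gPoly r μ) := by
      calc ∑ p ∈ (bx s).attach, psiMap s A l p * thetaMap F r s μ p
          = ∑ p ∈ (bx s).attach, ∑ a ∈ A.attach,
              l a * (MvPolynomial.coeff (mon (p : ℕ × ℕ)) (F * gPoly r μ)
                * ((a : EuclideanSpace ℝ (Fin 2)) 0) ^ (p : ℕ × ℕ).1
                * ((a : EuclideanSpace ℝ (Fin 2)) 1) ^ (p : ℕ × ℕ).2) := by
            refine Finset.sum_congr rfl fun p _ => ?_
            rw [psiMap_apply, thetaMap_apply, Finset.sum_mul]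
            exact Finset.sum_congr rfl fun a _ => by ring
        _ = ∑ a ∈ A.attach, ∑ p ∈ (bx s).attach,
              l a * (MvPolynomial.coeff (mon (p : ℕ × ℕ)) (F * gPoly r μ)
                * ((a : EuclideanSpace ℝ (Fin 2)) 0) ^ (p : ℕ × ℕ).1
                * ((a : EuclideanSpace ℝ (Fin 2)) 1) ^ (p : ℕ × ℕ).2) := Finset.sum_comm
        _ = ∑ a ∈ A.attach, l a *
              eval (fun i => (a : EuclideanSpace ℝ (Fin 2)) i) (F * gPoly r μ) := by
            refine Finset.sum_congr rfl fun a _ => ?_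
            rw [← Finset.mul_sum]
            congr 1
            rw [eval_bx (F * gPoly r μ) (hFGdeg μ) a]
            rw [← Finset.sum_attach (bx s)]
    rw [hswap]
    refine Finset.sum_eq_zero fun a _ => ?_
    rw [map_mul]
    rw [hvan a a.2]
    ring
  -- injectivity of theta
  have hθinj : Function.Injective (thetaMap F r s) := by
    intro μ ν h
    rw [← sub_eq_zero, ← map_sub] at h
    set τ := μ - ν with hτ
    have hFG : F * gPoly r τ = 0 := by
      apply MvPolynomial.ext
      intro e
      rw [MvPolynomial.coeff_zero]
      rcases le_or_gt (e 0 + e 1) s with he | he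
      · have : (⟨(e 0, e 1), mem_bx.mpr he⟩ : ↥(bx s)) ∈ (bx s).attach := Finset.mem_attach _ _
        have h2 := congrFun h ⟨(e 0, e 1), mem_bx.mpr he⟩
        rw [thetaMap_apply] at h2
        rw [eq_mon e]
        exact h2
      · refine MvPolynomial.coeff_eq_zero_of_totalDegree_lt ?_
        refine lt_of_le_of_lt (hFGdeg τ) ?_
        have h7 : (∑ i ∈ e.support, e i) = e 0 + e 1 := sum_eq_apply e
        rw [h7]
        omega
    have hg : gPoly r τ = 0 := by
      rcases mul_eq_zero.mp hFG with h' | h'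
      · exact absurd h' hF0
      · exact h'
    have : τ = 0 := by
      funext q
      rw [← gPoly_coeff r τ q, hg, MvPolynomial.coeff_zero]
      rfl
    rw [hτ] at this
    exact sub_eq_zero.mp (by exact_mod_cast this)
  -- injectivity of psi
  have hψinj : ∀ l : ↥A → ℝ, psiMap s A l = 0 → l = 0 := by
    intro l hl
    set lam : EuclideanSpace ℝ (Fin 2) → ℝ :=
      fun x => if h : x ∈ A then l ⟨x, h⟩ else 0 with hlam
    have hm : ∀ i j : ℕ, i + j ≤ s → ∑ a ∈ A, lam a * (a 0) ^ i * (a 1) ^ j = 0 := by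
      intro i j hij
      have h2 := congrFun hl ⟨(i, j), mem_bx.mpr hij⟩
      rw [psiMap_apply] at h2
      have h3 : ∑ a ∈ A.attach,
          l a * ((a : EuclideanSpace ℝ (Fin 2)) 0) ^ i
            * ((a : EuclideanSpace ℝ (Fin 2)) 1) ^ j = 0 := by simpa using h2
      rw [← Finset.sum_attach A (fun a => lam a * (a 0) ^ i * (a 1) ^ j), ← h3]
      refine Finset.sum_congr rfl fun a _ => ?_
      simp only [hlam]
      rw [dif_pos a.2]
    have hz := moments_injective A hA lam hm
    funext a
    have h6 : lam ↑a = l a := by simp only [hlam]; rw [dif_pos a.2]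
    have h5 := hz a a.2
    rw [h6] at h5
    simpa using h5
  -- combined injectivity
  have hinj : Function.Injective ((psiMap s A).coprod (thetaMap F r s)) := by
    rw [injective_iff_map_eq_zero]
    rintro ⟨l, μ⟩ h
    rw [LinearMap.coprod_apply] at h
    have hpsi : psiMap s A l = 0 := by
      have hdot : ∑ p ∈ (bx s).attach, psiMap s A l p * psiMap s A l p = 0 := by
        have h2 : ∀ p ∈ (bx s).attach, psiMap s A l p = - thetaMap F r s μ p := by
          intro p _
          have := congrFun h p
          simp only [Pi.add_apply, Pi.zero_apply] at this
          linarith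
        calc ∑ p ∈ (bx s).attach, psiMap s A l p * psiMap s A l p
            = - ∑ p ∈ (bx s).attach, psiMap s A l p * thetaMap F r s μ p := by
              rw [← Finset.sum_neg_distrib]
              refine Finset.sum_congr rfl fun p hp => ?_
              rw [h2 p hp]
              ring
          _ = 0 := by rw [horth]; ring
      funext p
      have hnn : ∀ p ∈ (bx s).attach, 0 ≤ psiMap s A l p * psiMap s A l p :=
        fun p _ => mul_self_nonneg _
      have := (Finset.sum_eq_zero_iff_of_nonneg hnn).mp hdot p (Finset.mem_attach _ _)
      have := mul_self_eq_zero.mp this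
      exact this
    have hl0 : l = 0 := hψinj l hpsi
    have hμ0 : μ = 0 := by
      apply hθinj
      rw [map_zero]
      rw [hl0, map_zero, zero_add] at h
      exact h
    rw [hl0, hμ0]
    rfl
  -- rank counting
  have hcount : A.card + (bx r).card ≤ (bx s).card := by
    have hle := LinearMap.finrank_le_finrank_of_injective hinj
    rw [Module.finrank_prod] at hle
    simp only [Module.finrank_pi, Fintype.card_coe] at hle
    exact hle
  -- arithmetic
  have c1 := card_bx s
  have c2 := card_bx r
  have hs' : s = d + r := by omega
  have hq : (A.card : ℚ) + ((bx r).card : ℚ) ≤ ((bx s).card : ℚ) := by exact_mod_cast hcount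
  have hq1 : ((bx s).card : ℚ) * 2 = (s + 1) * (s + 2) := by exact_mod_cast c1
  have hq2 : ((bx r).card : ℚ) * 2 = (r + 1) * (r + 2) := by exact_mod_cast c2
  have hsq : (s : ℚ) = (d : ℚ) + (r : ℚ) := by exact_mod_cast hs'
  rw [hsq]
  nlinarith [hq, hq1, hq2, hsq]
end
end

section
/- Let V ⊆ ℝ^n be the union of p spheres (each with arbitrary center and positive radius), and let A ⊆ V be a finite s-distance set. Then |A| ≤ ∑_{i=0}^{2p−1} C(n+s−i−1, s−i). -/
noncomputable section

/-!
Let `D` be the set of distances of `A`, so `#D ≤ s`, and put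
`F(a, b) = ∏_{d ∈ D} (1 - ‖a - b‖² / d²)`, which is the identity matrix on `A`.
Since `‖a - b‖² = (‖a‖² + ‖b‖²) - 2⟪a, b⟫`, splitting each binomial `(‖a‖² + ‖b‖²)^k`
symmetrically gives `F(a, b) = f(a, b) + f(b, a)` where `f(·, b)` is a polynomial of degree
at most `#D ≤ s`. A real matrix `M` with `M + Mᵀ = 1` is nonsingular (`vᵀ M v = ‖v‖² / 2`), so
`|A|` is at most the dimension of the space of functions on `A` cut out by polynomials of degree
`≤ s`. The product `G` of the `p` sphere equations has degree `2p` and vanishes on `A`, so all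
multiples of `G` of degree `≤ s` evaluate to zero, and that dimension is at most the number of
monomials of degree in `(s - 2p, s]`, which is the stated sum.
-/

open Finset MvPolynomial Module Matrix

namespace Matrix

theorem mulVec_injective_of_add_transpose_eq_one {R α : Type*} [CommRing R] [LinearOrder R]
    [IsStrictOrderedRing R] [Fintype α] [DecidableEq α] {M : Matrix α α R} (hM : M + Mᵀ = 1) :
    Function.Injective M.mulVec := by
  rw [← coe_mulVecLin, injective_iff_map_eq_zero]
  intro v hv
  rw [mulVecLin_apply] at hv
  rw [← dotProduct_self_eq_zero]
  calc v ⬝ᵥ v = v ⬝ᵥ ((M + Mᵀ) *ᵥ v) := by rw [hM, one_mulVec]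
    _ = v ⬝ᵥ (M *ᵥ v) + (M *ᵥ v) ⬝ᵥ v := by
      rw [add_mulVec, dotProduct_add, dotProduct_mulVec v Mᵀ, vecMul_transpose]
    _ = 0 := by simp [hv]

theorem card_le_finrank_of_add_transpose_eq_one {K α : Type*} [Field K] [LinearOrder K]
    [IsStrictOrderedRing K] [Fintype α] [DecidableEq α] {M : Matrix α α K} (hM : M + Mᵀ = 1)
    (W : Submodule K (α → K)) (hcol : ∀ b, (fun a => M a b) ∈ W) :
    Fintype.card α ≤ finrank K W :=
  calc Fintype.card α = finrank K (LinearMap.range M.mulVecLin) := by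
        rw [LinearMap.finrank_range_of_inj (M.mulVec_injective_of_add_transpose_eq_one hM),
          finrank_fintype_fun_eq_card]
    _ ≤ finrank K W := by
        refine Submodule.finrank_mono ?_
        rw [range_mulVecLin, Submodule.span_le]
        rintro _ ⟨b, rfl⟩
        exact hcol b

end Matrix

theorem Submodule.finrank_map_add_finrank_le {K M N : Type*} [Field K] [AddCommGroup M]
    [Module K M] [AddCommGroup N] [Module K N] (f : M →ₗ[K] N) {V W : Submodule K M}
    [FiniteDimensional K V] (hWV : W ≤ V) (hWf : W ≤ LinearMap.ker f) :
    finrank K (V.map f) + finrank K W ≤ finrank K V := by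
  have hker : W.comap V.subtype ≤ LinearMap.ker (f.domRestrict V) := fun x hx => hWf hx
  rw [← LinearMap.range_domRestrict, ← (comapSubtypeEquivOfLe hWV).finrank_eq,
    ← (f.domRestrict V).finrank_range_add_finrank_ker]
  exact Nat.add_le_add_left (finrank_mono hker) _

theorem sum_range_choose_split (n s e : ℕ) :
    ∑ u ∈ range (s + 1), (n + u - 1).choose u =
      ∑ u ∈ range (s + 1 - e), (n + u - 1).choose u +
        ∑ i ∈ range e, if i ≤ s then (n + s - i - 1).choose (s - i) else 0 := by
  induction e with
  | zero => simp
  | succ e ih =>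
    rw [ih, sum_range_succ]
    split_ifs with hes
    · rw [show s + 1 - e = s - e + 1 by omega, sum_range_succ,
        show n + s - e - 1 = n + (s - e) - 1 by omega, show s + 1 - (e + 1) = s - e by omega]
      ring
    · rw [show s + 1 - e = s + 1 - (e + 1) by omega, add_zero]

namespace MvPolynomial

variable {K σ : Type*} [Field K]

theorem restrictTotalDegree_eq_restrictSupport (s : ℕ) :
    restrictTotalDegree σ K s = restrictSupport K {β | β.degree < s + 1} := by
  rw [restrictTotalDegree]
  congr! 1
  ext β
  exact Nat.lt_succ_iff.symm

theorem finrank_restrictSupport_degree_lt [Fintype σ] (m : ℕ) :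
    finrank K (restrictSupport K {β : σ →₀ ℕ | β.degree < m}) =
      ∑ u ∈ range m, (Fintype.card σ + u - 1).choose u := by
  classical
  have hS : {β : σ →₀ ℕ | β.degree < m} =
      ↑((range m).biUnion fun u => (univ : Finset σ).finsuppAntidiag u) := by
    ext β
    simp [Finsupp.degree_eq_sum]
  rw [finrank_eq_nat_card_basis (basisRestrictSupport K _), hS, Nat.card_coe_set_eq,
    Set.ncard_coe_finset, card_biUnion]
  · simp [card_finsuppAntidiag_nat_eq_choose]
  · intro u _ v _ huv
    simp only [Function.onFun, disjoint_left, mem_finsuppAntidiag]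
    rintro β ⟨rfl, -⟩ ⟨rfl, -⟩
    exact huv rfl

theorem totalDegree_add_le_of_mem_restrictSupport {h : MvPolynomial σ K} {s e : ℕ}
    (hh : h ∈ restrictSupport K {β | β.degree < s + 1 - e}) (h0 : h ≠ 0) :
    h.totalDegree + e ≤ s := by
  obtain ⟨β, hβ⟩ := support_nonempty.mpr h0
  have hβs : β.degree < s + 1 - e := hh hβ
  have hdeg : h.totalDegree ≤ s - e := Finset.sup_le fun γ hγ => by
    have hγs : γ.degree < s + 1 - e := hh hγ
    change γ.degree ≤ s - e
    omega
  omega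

theorem finrank_map_restrictTotalDegree_le [Fintype σ] {N : Type*} [AddCommGroup N]
    [Module K N] (f : MvPolynomial σ K →ₗ[K] N) {G : MvPolynomial σ K} (hG : G ≠ 0) {e : ℕ}
    (hGe : G.totalDegree ≤ e) (hGf : ∀ h, f (G * h) = 0) (s : ℕ) :
    finrank K ((restrictTotalDegree σ K s).map f) ≤
      ∑ i ∈ range e, if i ≤ s then (Fintype.card σ + s - i - 1).choose (s - i) else 0 := by
  set U := restrictSupport K {β : σ →₀ ℕ | β.degree < s + 1 - e}
  have hGU : U.map (LinearMap.mulLeft K G) ≤ restrictTotalDegree σ K s := by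
    rintro _ ⟨h, hh, rfl⟩
    rw [LinearMap.mulLeft_apply, mem_restrictTotalDegree]
    rcases eq_or_ne h 0 with rfl | h0
    · simp
    · have := totalDegree_add_le_of_mem_restrictSupport hh h0
      have := totalDegree_mul G h
      omega
  have hGUf : U.map (LinearMap.mulLeft K G) ≤ LinearMap.ker f := by
    rintro _ ⟨h, -, rfl⟩
    exact hGf h
  have hdim : finrank K (restrictTotalDegree σ K s) = finrank K U +
      ∑ i ∈ range e, if i ≤ s then (Fintype.card σ + s - i - 1).choose (s - i) else 0 := by
    rw [restrictTotalDegree_eq_restrictSupport, finrank_restrictSupport_degree_lt,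
      finrank_restrictSupport_degree_lt, sum_range_choose_split _ _ e]
  have key := Submodule.finrank_map_add_finrank_le f hGU hGUf
  rw [← (Submodule.equivMapOfInjective _ (mul_right_injective₀ hG) U).finrank_eq, hdim] at key
  omega

end MvPolynomial

def halfWeight (k i : ℕ) : ℝ := if 2 * i < k then 1 else if 2 * i = k then 1 / 2 else 0

theorem halfWeight_add_halfWeight_sub {k i : ℕ} (h : i ≤ k) :
    halfWeight k i + halfWeight k (k - i) = 1 := by
  unfold halfWeight
  split_ifs <;> first | omega | norm_num

theorem halfWeight_eq_zero {k i : ℕ} (h : k < 2 * i) : halfWeight k i = 0 := by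
  unfold halfWeight
  split_ifs <;> first | omega | rfl

section Algebra

variable {S T : Type*} [CommRing S] [Algebra ℝ S] [CommRing T] [Algebra ℝ T]

def halfPow (k : ℕ) (u v : S) : S :=
  ∑ i ∈ range (k + 1), (halfWeight k i * k.choose i) • (u ^ i * v ^ (k - i))

theorem halfPow_add_halfPow_swap (k : ℕ) (u v : S) :
    halfPow k u v + halfPow k v u = (u + v) ^ k := by
  have hswap : halfPow k v u =
      ∑ i ∈ range (k + 1), (halfWeight k (k - i) * k.choose i) • (u ^ i * v ^ (k - i)) := by
    rw [halfPow, ← sum_range_reflect]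
    refine sum_congr rfl fun i hi => ?_
    have hik : i ≤ k := Nat.lt_succ_iff.mp (mem_range.mp hi)
    rw [show k + 1 - 1 - i = k - i by omega, Nat.sub_sub_self hik, Nat.choose_symm hik,
      mul_comm (v ^ _)]
  rw [hswap, halfPow, ← sum_add_distrib, add_pow]
  refine sum_congr rfl fun i hi => ?_
  rw [← add_smul, ← add_mul, halfWeight_add_halfWeight_sub (Nat.lt_succ_iff.mp (mem_range.mp hi)),
    one_mul, Nat.cast_smul_eq_nsmul, nsmul_eq_mul, mul_comm]

theorem map_halfPow (φ : S →ₐ[ℝ] T) (k : ℕ) (u v : S) :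
    φ (halfPow k u v) = halfPow k (φ u) (φ v) := by
  simp [halfPow]

/-- Expand `∏_{d ∈ D} (-(u + v) / d² + (1 + 2 w / d²))` over subsets `t` of `D` and replace each
`(u + v) ^ #t` by `halfPow #t u v`. -/
def halfProd (D : Finset ℝ) (u v w : S) : S :=
  ∑ t ∈ D.powerset,
    (∏ d ∈ t, -(d ^ 2)⁻¹) • (halfPow #t u v * ∏ d ∈ D \ t, (1 + (2 / d ^ 2) • w))

theorem halfProd_add_halfProd_swap (D : Finset ℝ) (u v w : S) :
    halfProd D u v w + halfProd D v u w = ∏ d ∈ D, (1 - (d ^ 2)⁻¹ • (u + v - 2 * w)) := by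
  have hfactor (d : ℝ) :
      1 - (d ^ 2)⁻¹ • (u + v - 2 * w) = -(d ^ 2)⁻¹ • (u + v) + (1 + (2 / d ^ 2) • w) := by
    simp only [Algebra.smul_def, div_eq_mul_inv, map_neg, map_mul, map_ofNat]
    ring
  rw [prod_congr rfl fun d _ => hfactor d, prod_add]
  simp_rw [prod_smul, prod_const, halfProd, ← sum_add_distrib, smul_mul_assoc,
    ← smul_add, ← add_mul, halfPow_add_halfPow_swap]

theorem map_halfProd (φ : S →ₐ[ℝ] T) (D : Finset ℝ) (u v w : S) :
    φ (halfProd D u v w) = halfProd D (φ u) (φ v) (φ w) := by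
  simp [halfProd, map_halfPow]

end Algebra

section Degree

variable {σ : Type*}

theorem totalDegree_halfPow_le {u v : MvPolynomial σ ℝ} (hu : u.totalDegree ≤ 2)
    (hv : v.totalDegree = 0) (k : ℕ) : (halfPow k u v).totalDegree ≤ k := by
  refine totalDegree_finsetSum_le fun i _ => ?_
  rcases lt_or_ge k (2 * i) with hki | hik
  · simp [halfWeight_eq_zero hki]
  · calc _ ≤ (u ^ i * v ^ (k - i)).totalDegree := totalDegree_smul_le _ _
      _ ≤ i * 2 + (k - i) * 0 := by
        grw [totalDegree_mul, totalDegree_pow, totalDegree_pow, hu, hv]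
      _ ≤ k := by omega

theorem totalDegree_halfProd_le {u v w : MvPolynomial σ ℝ} (hu : u.totalDegree ≤ 2)
    (hv : v.totalDegree = 0) (hw : w.totalDegree ≤ 1) (D : Finset ℝ) :
    (halfProd D u v w).totalDegree ≤ #D := by
  refine totalDegree_finsetSum_le fun t ht => ?_
  have hlin : ∀ d ∈ D \ t, (1 + (2 / d ^ 2) • w).totalDegree ≤ 1 := fun d _ => by
    grw [totalDegree_add, totalDegree_one, totalDegree_smul_le, hw]
    simp
  calc _ ≤ (halfPow #t u v * ∏ d ∈ D \ t, (1 + (2 / d ^ 2) • w)).totalDegree :=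
        totalDegree_smul_le _ _
    _ ≤ #t + #(D \ t) := by
        grw [totalDegree_mul, totalDegree_halfPow_le hu hv, totalDegree_finsetProd,
          sum_le_sum hlin]
        simp
    _ = #D := by rw [add_comm, card_sdiff_add_card_eq_card (mem_powerset.mp ht)]

end Degree

section InnerProductSpace

variable {E : Type*} [NormedAddCommGroup E] [InnerProductSpace ℝ E]

theorem halfProd_add_halfProd_swap_eq_prod_dist (D : Finset ℝ) (a b : E) :
    halfProd D (‖a‖ ^ 2) (‖b‖ ^ 2) (inner ℝ a b) + halfProd D (‖b‖ ^ 2) (‖a‖ ^ 2) (inner ℝ b a) =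
      ∏ d ∈ D, (1 - dist a b ^ 2 / d ^ 2) := by
  rw [real_inner_comm a b, halfProd_add_halfProd_swap, dist_eq_norm, norm_sub_sq_real]
  simp only [smul_eq_mul]
  exact prod_congr rfl fun d _ => by ring

def halfProdMatrix (D : Finset ℝ) (A : Finset E) : Matrix A A ℝ :=
  fun a b => halfProd D (‖(a : E)‖ ^ 2) (‖(b : E)‖ ^ 2) (inner ℝ (a : E) b)

theorem halfProdMatrix_add_transpose [DecidableEq E] {D : Finset ℝ} {A : Finset E}
    (hD : ∀ a ∈ A, ∀ b ∈ A, a ≠ b → dist a b ∈ D) :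
    halfProdMatrix D A + (halfProdMatrix D A)ᵀ = 1 := by
  ext a b
  simp only [Matrix.add_apply, Matrix.transpose_apply, halfProdMatrix,
    halfProd_add_halfProd_swap_eq_prod_dist]
  rcases eq_or_ne a b with rfl | hab
  · simp
  · have hab' : (a : E) ≠ b := Subtype.coe_ne_coe.mpr hab
    rw [Matrix.one_apply_ne hab]
    refine prod_eq_zero (hD a a.2 b b.2 hab') ?_
    rw [div_self (pow_ne_zero 2 (dist_ne_zero.mpr hab')), sub_self]

end InnerProductSpace

section Euclidean

variable {σ : Type*} [Fintype σ]

def normSqPoly (σ : Type*) [Fintype σ] : MvPolynomial σ ℝ := ∑ i, X i ^ 2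

def innerPoly (b : EuclideanSpace ℝ σ) : MvPolynomial σ ℝ := ∑ i, C (b i) * X i

theorem aeval_normSqPoly (a : EuclideanSpace ℝ σ) : aeval a.ofLp (normSqPoly σ) = ‖a‖ ^ 2 := by
  simp [normSqPoly, EuclideanSpace.real_norm_sq_eq]

theorem aeval_innerPoly (a b : EuclideanSpace ℝ σ) :
    aeval a.ofLp (innerPoly b) = inner ℝ a b := by
  simp [innerPoly, PiLp.inner_apply, mul_comm]

theorem totalDegree_normSqPoly_le : (normSqPoly σ).totalDegree ≤ 2 :=
  totalDegree_finsetSum_le fun i _ => (totalDegree_X_pow i 2).le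

theorem totalDegree_innerPoly_le (b : EuclideanSpace ℝ σ) : (innerPoly b).totalDegree ≤ 1 :=
  totalDegree_finsetSum_le fun i _ => by grw [totalDegree_mul, totalDegree_C, totalDegree_X]

def sphereEqn (c : EuclideanSpace ℝ σ) (r : ℝ) : MvPolynomial σ ℝ :=
  normSqPoly σ - (2 : ℝ) • innerPoly c + C (‖c‖ ^ 2 - r ^ 2)

theorem aeval_sphereEqn (c : EuclideanSpace ℝ σ) (r : ℝ) (a : EuclideanSpace ℝ σ) :
    aeval a.ofLp (sphereEqn c r) = dist a c ^ 2 - r ^ 2 := by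
  rw [sphereEqn, map_add, map_sub, map_smul, aeval_normSqPoly, aeval_innerPoly, aeval_C,
    Algebra.algebraMap_self_apply, dist_eq_norm, norm_sub_sq_real, smul_eq_mul]
  ring

theorem totalDegree_sphereEqn_le (c : EuclideanSpace ℝ σ) (r : ℝ) :
    (sphereEqn c r).totalDegree ≤ 2 := by
  grw [sphereEqn, totalDegree_add, totalDegree_sub, totalDegree_smul_le, totalDegree_C,
    totalDegree_normSqPoly_le, totalDegree_innerPoly_le]
  simp

theorem sphereEqn_ne_zero (c : EuclideanSpace ℝ σ) {r : ℝ} (hr : 0 < r) : sphereEqn c r ≠ 0 := by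
  intro h
  have := aeval_sphereEqn c r c
  rw [h, map_zero, dist_self] at this
  nlinarith

def evalOn (A : Finset (EuclideanSpace ℝ σ)) : MvPolynomial σ ℝ →ₗ[ℝ] (A → ℝ) :=
  LinearMap.pi fun a => (aeval (a : EuclideanSpace ℝ σ).ofLp).toLinearMap

omit [Fintype σ] in
theorem evalOn_apply (A : Finset (EuclideanSpace ℝ σ)) (q : MvPolynomial σ ℝ) (a : A) :
    evalOn A q a = aeval (a : EuclideanSpace ℝ σ).ofLp q :=
  rfl

theorem halfProdMatrix_col_mem {D : Finset ℝ} {s : ℕ} (hD : #D ≤ s)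
    (A : Finset (EuclideanSpace ℝ σ)) (b : A) :
    (fun a => halfProdMatrix D A a b) ∈ (restrictTotalDegree σ ℝ s).map (evalOn A) := by
  refine ⟨halfProd D (normSqPoly σ) (C (‖(b : EuclideanSpace ℝ σ)‖ ^ 2)) (innerPoly b), ?_, ?_⟩
  · rw [SetLike.mem_coe, mem_restrictTotalDegree]
    exact (totalDegree_halfProd_le totalDegree_normSqPoly_le (totalDegree_C _)
      (totalDegree_innerPoly_le _) D).trans hD
  · ext a
    simp [evalOn_apply, map_halfProd, aeval_normSqPoly, aeval_innerPoly, halfProdMatrix]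

end Euclidean

theorem exists_finset_card_le_of_distSet {n s : ℕ} {A : Finset (EuclideanSpace ℝ (Fin n))}
    (hA : (distSet (A : Set (EuclideanSpace ℝ (Fin n)))).ncard ≤ s) :
    ∃ D : Finset ℝ, #D ≤ s ∧ ∀ a ∈ A, ∀ b ∈ A, a ≠ b → dist a b ∈ D := by
  have hfin : (distSet (A : Set (EuclideanSpace ℝ (Fin n)))).Finite := by
    refine (A.finite_toSet.image2 dist A.finite_toSet).subset ?_
    rintro _ ⟨a, ha, b, hb, -, rfl⟩
    exact Set.mem_image2_of_mem ha hb
  refine ⟨hfin.toFinset, by rwa [← Set.ncard_eq_toFinset_card _ hfin], ?_⟩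
  intro a ha b hb hab
  rw [Set.Finite.mem_toFinset]
  exact ⟨a, ha, b, hb, hab, rfl⟩

/-- Bound for `s`-distance sets on a union of `p` spheres in `ℝ^n`
(binomial coefficients with negative lower index are `0`, whence the `if`). -/
theorem sdist_on_union_of_spheres {n p s : ℕ}
    (c : Fin p → EuclideanSpace ℝ (Fin n)) (r : Fin p → ℝ) (hr : ∀ i, 0 < r i)
    (A : Finset (EuclideanSpace ℝ (Fin n)))
    (hA : (distSet (A : Set (EuclideanSpace ℝ (Fin n)))).ncard ≤ s)
    (hmem : ∀ a ∈ A, ∃ i, dist a (c i) = r i) :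
    A.card ≤ ∑ i ∈ Finset.range (2 * p),
      if i ≤ s then (n + s - i - 1).choose (s - i) else 0 := by
  classical
  obtain ⟨D, hDs, hDA⟩ := exists_finset_card_le_of_distSet hA
  set G := ∏ i, sphereEqn (c i) (r i)
  have hG : G ≠ 0 := prod_ne_zero_iff.mpr fun i _ => sphereEqn_ne_zero (c i) (hr i)
  have hGdeg : G.totalDegree ≤ 2 * p := by
    grw [totalDegree_finsetProd, sum_le_sum fun i _ => totalDegree_sphereEqn_le (c i) (r i)]
    simp [mul_comm]
  have hGA : ∀ h, evalOn A (G * h) = 0 := by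
    intro h
    ext a
    obtain ⟨i, hi⟩ := hmem a a.2
    have hGa : aeval (a : EuclideanSpace ℝ (Fin n)).ofLp G = 0 := by
      rw [map_prod]
      exact prod_eq_zero (mem_univ i) (by rw [aeval_sphereEqn, hi, sub_self])
    rw [evalOn_apply, map_mul, hGa, zero_mul, Pi.zero_apply]
  calc A.card = Fintype.card A := (Fintype.card_coe A).symm
    _ ≤ finrank ℝ ((restrictTotalDegree (Fin n) ℝ s).map (evalOn A)) :=
        card_le_finrank_of_add_transpose_eq_one (halfProdMatrix_add_transpose hDA) _
          (halfProdMatrix_col_mem hDs A)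
    _ ≤ _ := by simpa using finrank_map_restrictTotalDegree_le (evalOn A) hG hGdeg hGA s
end
end

section
/- Let T₁,…,Tₙ ⊆ ℝ be finite sets each of size q ≥ 2, and let B = T₁ × ⋯ × Tₙ ⊆ ℝ^n. If A ⊆ B is an s-distance set, then |A| ≤ |{(α₁,…,αₙ) ∈ ℕ^n : 0 ≤ αᵢ ≤ q−1 for all i, and ∑ᵢ αᵢ ≤ s}|. -/
/-!
For weights `c` on `A` put `ℓ_c(p) = ∑_a c_a p(a)`. It suffices to show that `c = 0` whenever `ℓ_c`
kills the reduced monomials `x^α` (`α_i < q`, `|α| ≤ s`): the map `c ↦ (ℓ_c(x^α))_α` is then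
injective. On the box, interpolation on `T_i` trades a monomial of degree `≥ q` in `x_i` for
polynomials of lower total degree, so `ℓ_c` kills every polynomial of degree `≤ s`. With `D` the
at most `s` squared distances, `F(x,y) = ∏_{d ∈ D} (d - ‖x - y‖²)` is a combination of products
`f(x) g(y)` with `deg f + deg g ≤ 2s`; one factor has degree `≤ s`, so
`∑_{a,b} c_a c_b F(a,b) = 0`. Since `F` vanishes off the diagonal this sum is
`(∏ d) ∑ c_a²`, hence `c = 0`.
-/

noncomputable section

open MvPolynomial Finset

theorem Polynomial.totalDegree_toMvPolynomial_le {R σ : Type*} [CommSemiring R] (p : Polynomial R)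
    (i : σ) : (p.toMvPolynomial i).totalDegree ≤ p.natDegree := by
  conv_lhs => rw [p.as_sum_range_C_mul_X_pow]
  simp only [map_sum, map_mul, map_pow, toMvPolynomial_C, toMvPolynomial_X,
    MvPolynomial.C_mul_X_pow_eq_monomial]
  refine (totalDegree_finsetSum _ _).trans (Finset.sup_le fun j hj => ?_)
  refine (totalDegree_monomial_le _ _).trans ?_
  simpa [Nat.lt_succ_iff] using hj

theorem MvPolynomial.totalDegree_X_pow_le {σ R : Type*} [CommSemiring R] (i : σ) (k : ℕ) :
    (X i ^ k : MvPolynomial σ R).totalDegree ≤ k := by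
  rw [X_pow_eq_monomial]
  exact (totalDegree_monomial_le _ _).trans (by simp)

theorem LinearMap.map_eq_zero_of_totalDegree_le {σ R M : Type*} [Fintype σ] [CommSemiring R]
    [AddCommMonoid M] [Module R M] (L : MvPolynomial σ R →ₗ[R] M) {k : ℕ}
    (hL : ∀ β : σ → ℕ, ∑ i, β i ≤ k → L (∏ i, X i ^ β i) = 0) {p : MvPolynomial σ R}
    (hp : p.totalDegree ≤ k) : L p = 0 := by
  rw [p.as_sum, map_sum]
  refine sum_eq_zero fun β hβ => ?_
  have hβk : ∑ i, β i ≤ k := by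
    simpa [Finsupp.sum_fintype] using (le_totalDegree hβ).trans hp
  rw [monomial_eq, Finsupp.prod_fintype _ _ (by simp), ← smul_eq_C_mul, map_smul, hL β hβk,
    smul_zero]

section WeightedEval

variable {σ ι R : Type*} [CommSemiring R] [Fintype ι]

def weightedEval (pt : ι → σ → R) (c : ι → R) : MvPolynomial σ R →ₗ[R] R :=
  ∑ a, c a • (aeval (pt a)).toLinearMap

@[simp]
theorem weightedEval_apply (pt : ι → σ → R) (c : ι → R) (p : MvPolynomial σ R) :
    weightedEval pt c p = ∑ a, c a * eval (pt a) p := by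
  simp [weightedEval]

end WeightedEval

section Reduction

variable {σ K : Type*} [Fintype σ] [Field K]

theorem exists_totalDegree_lt_eval_eq_prod_pow {S : Finset K} (hS : S.Nonempty) {β : σ → ℕ}
    {i : σ} (hβ : #S ≤ β i) :
    ∃ r : MvPolynomial σ K, r.totalDegree < ∑ j, β j ∧
      ∀ x : σ → K, x i ∈ S → eval x r = ∏ j, x j ^ β j := by
  classical
  let P := Lagrange.interpolate S id (fun t : K => t ^ β i)
  have hP : P.natDegree < β i := by
    have : P.natDegree ≤ #S - 1 := Polynomial.natDegree_le_of_degree_le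
      (Lagrange.degree_interpolate_le _ (Set.injOn_id _))
    have := hS.card_pos
    omega
  refine ⟨(∏ j ∈ univ.erase i, X j ^ β j) * P.toMvPolynomial i, ?_, fun x hx => ?_⟩
  · calc _ ≤ (∏ j ∈ univ.erase i, X j ^ β j : MvPolynomial σ K).totalDegree + P.natDegree :=
          (totalDegree_mul _ _).trans (add_le_add_right (P.totalDegree_toMvPolynomial_le i) _)
      _ < ∑ j ∈ univ.erase i, β j + β i := by
          refine add_lt_add_of_le_of_lt ((totalDegree_finsetProd _ _).trans ?_) hP
          exact (sum_le_sum fun j _ => totalDegree_X_pow_le j (β j))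
      _ = ∑ j, β j := sum_erase_add _ _ (mem_univ i)
  · have hPx : P.eval (x i) = x i ^ β i :=
      Lagrange.eval_interpolate_at_node _ (Set.injOn_id _) hx
    rw [eval_mul, eval_toMvPolynomial, hPx, ← prod_erase_mul _ _ (mem_univ i)]
    simp

theorem weightedEval_eq_zero_of_totalDegree_le {ι : Type*} [Fintype ι] (pt : ι → σ → K)
    (c : ι → K) (T : σ → Finset K) (hT : ∀ i, (T i).Nonempty) (hpt : ∀ a i, pt a i ∈ T i)
    {s : ℕ} (hred : ∀ β : σ → ℕ, (∀ i, β i < #(T i)) → ∑ i, β i ≤ s →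
      weightedEval pt c (∏ i, X i ^ β i) = 0)
    {p : MvPolynomial σ K} (hp : p.totalDegree ≤ s) : weightedEval pt c p = 0 := by
  suffices ∀ k ≤ s, ∀ β : σ → ℕ, ∑ i, β i ≤ k → weightedEval pt c (∏ i, X i ^ β i) = 0 from
    LinearMap.map_eq_zero_of_totalDegree_le _ (this s le_rfl) hp
  intro k
  induction k using Nat.strong_induction_on with
  | _ k ih =>
  intro hks β hβk
  by_cases hβT : ∀ i, β i < #(T i)
  · exact hred β hβT (hβk.trans hks)
  obtain ⟨i, hi⟩ := not_forall.mp hβT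
  obtain ⟨r, hr, hrβ⟩ := exists_totalDegree_lt_eval_eq_prod_pow (hT i) (not_lt.mp hi)
  have hβr : weightedEval pt c (∏ i, X i ^ β i) = weightedEval pt c r := by
    simp [hrβ _ (hpt _ i)]
  rw [hβr]
  exact LinearMap.map_eq_zero_of_totalDegree_le _
    (ih _ (hr.trans_le hβk) (by omega)) le_rfl

end Reduction

section Kernels

variable (σ R : Type*) [CommRing R]

def productKernels (d : ℕ) : Submodule R ((σ → R) → (σ → R) → R) :=
  Submodule.span R {F | ∃ f g : MvPolynomial σ R, f.totalDegree + g.totalDegree ≤ d ∧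
    F = fun x y => eval x f * eval y g}

variable {σ R}

theorem productKernels_mono : Monotone (productKernels σ R) := fun _ _ hde =>
  Submodule.span_mono fun _ ⟨f, g, hfg, hF⟩ => ⟨f, g, hfg.trans hde, hF⟩

theorem one_mem_productKernels : 1 ∈ productKernels σ R 0 :=
  Submodule.subset_span ⟨1, 1, by simp, by ext; simp⟩

theorem productKernels_mul_le (d e : ℕ) :
    productKernels σ R d * productKernels σ R e ≤ productKernels σ R (d + e) := by
  rw [productKernels, productKernels, Submodule.span_mul_span]
  refine Submodule.span_mono ?_
  rintro _ ⟨_, ⟨f, g, hfg, rfl⟩, _, ⟨f', g', hfg', rfl⟩, rfl⟩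
  refine ⟨f * f', g * g', ?_, by ext; simp only [Pi.mul_apply, map_mul]; ring⟩
  have := totalDegree_mul f f'
  have := totalDegree_mul g g'
  omega

def sqDistKernel [Fintype σ] (D : Finset R) (x y : σ → R) : R :=
  ∏ r ∈ D, (r - ∑ i, (x i - y i) ^ 2)

theorem sub_sum_sq_mem_productKernels [Fintype σ] (r : R) :
    (fun x y : σ → R => r - ∑ i, (x i - y i) ^ 2) ∈ productKernels σ R 2 := by
  have hgen : ∀ f g : MvPolynomial σ R, f.totalDegree + g.totalDegree ≤ 2 →
      (fun x y : σ → R => eval x f * eval y g) ∈ productKernels σ R 2 :=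
    fun f g hfg => Submodule.subset_span ⟨f, g, hfg, rfl⟩
  have hsq : (∑ i, X i ^ 2 : MvPolynomial σ R).totalDegree ≤ 2 :=
    (totalDegree_finsetSum _ _).trans (Finset.sup_le fun i _ => totalDegree_X_pow_le i 2)
  have hexpand : (fun x y : σ → R => r - ∑ i, (x i - y i) ^ 2) =
      (fun x y => eval x (C r) * eval y 1) - (fun x y => eval x (∑ i, X i ^ 2) * eval y 1)
        - (fun x y => eval x 1 * eval y (∑ i, X i ^ 2))
        + ∑ i, (2 : R) • fun x y => eval x (X i) * eval y (X i) := by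
    ext x y
    simp only [Pi.add_apply, Pi.sub_apply, Finset.sum_apply, Pi.smul_apply, smul_eq_mul, eval_C,
      map_one, map_sum, map_pow, eval_X, mul_one, one_mul, sub_sq, sum_add_distrib,
      sum_sub_distrib, mul_assoc]
    ring
  rw [hexpand]
  refine add_mem (sub_mem (sub_mem (hgen _ _ (by simp)) (hgen _ _ (by simpa using hsq)))
    (hgen _ _ (by simpa using hsq))) (sum_mem fun i _ => Submodule.smul_mem _ _ (hgen _ _ ?_))
  simpa using add_le_add (totalDegree_X_pow_le (R := R) i 1) (totalDegree_X_pow_le (R := R) i 1)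

theorem sqDistKernel_mem_productKernels [Fintype σ] (D : Finset R) :
    sqDistKernel D ∈ productKernels σ R (2 * #D) := by
  classical
  induction D using Finset.induction_on with
  | empty =>
    have h1 : sqDistKernel (∅ : Finset R) = (1 : (σ → R) → (σ → R) → R) := by
      funext x y
      simp [sqDistKernel]
    simpa [h1] using one_mem_productKernels
  | insert r D hr ih =>
    have hmul : sqDistKernel (insert r D) =
        (fun x y : σ → R => r - ∑ i, (x i - y i) ^ 2) * sqDistKernel D := by
      ext x y
      simp [sqDistKernel, prod_insert hr]
    rw [hmul, card_insert_of_notMem hr, mul_add_one, add_comm]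
    exact productKernels_mul_le 2 _ (Submodule.mul_mem_mul (sub_sum_sq_mem_productKernels r) ih)

variable {ι : Type*} [Fintype ι] (pt : ι → σ → R) (c : ι → R)

theorem sum_sum_mul_eq_zero_of_mem_productKernels {s : ℕ}
    (hc : ∀ p : MvPolynomial σ R, p.totalDegree ≤ s → weightedEval pt c p = 0)
    {F : (σ → R) → (σ → R) → R} (hF : F ∈ productKernels σ R (2 * s)) :
    ∑ a, ∑ b, c a * c b * F (pt a) (pt b) = 0 := by
  induction hF using Submodule.span_induction with
  | mem F hF =>
    obtain ⟨f, g, hfg, rfl⟩ := hF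
    have hsplit : ∑ a, ∑ b, c a * c b * (eval (pt a) f * eval (pt b) g) =
        weightedEval pt c f * weightedEval pt c g := by
      rw [weightedEval_apply, weightedEval_apply, sum_mul_sum]
      exact sum_congr rfl fun a _ => sum_congr rfl fun b _ => by ring
    rw [hsplit]
    rcases le_total f.totalDegree s with hf | hg
    · rw [hc f hf, zero_mul]
    · rw [hc g (by omega), mul_zero]
  | zero => simp
  | add F G _ _ hF hG => simp only [Pi.add_apply, mul_add, sum_add_distrib, hF, hG, add_zero]
  | smul t F _ hF =>
    simp only [Pi.smul_apply, smul_eq_mul, mul_left_comm _ t, ← mul_sum, hF, mul_zero]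

theorem sum_sum_mul_sqDistKernel [Fintype σ] (D : Finset R)
    (hD : ∀ a b, a ≠ b → ∑ i, (pt a i - pt b i) ^ 2 ∈ D) :
    ∑ a, ∑ b, c a * c b * sqDistKernel D (pt a) (pt b) = (∏ r ∈ D, r) * ∑ a, c a ^ 2 := by
  rw [mul_sum]
  refine sum_congr rfl fun a _ => ?_
  rw [sum_eq_single a (fun b _ hba => ?_) (by simp)]
  · simp only [sqDistKernel, sub_self, zero_pow two_ne_zero, sum_const_zero, sub_zero]
    ring
  · exact mul_eq_zero_of_right _ (prod_eq_zero (hD a b hba.symm) (sub_self _))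

end Kernels

theorem eq_zero_of_weightedEval_eq_zero {σ ι K : Type*} [Fintype σ] [Fintype ι] [Field K]
    [LinearOrder K] [IsStrictOrderedRing K] (pt : ι → σ → K) (c : ι → K) (D : Finset K)
    (hD0 : 0 ∉ D) (hD : ∀ a b, a ≠ b → ∑ i, (pt a i - pt b i) ^ 2 ∈ D) {s : ℕ} (hDs : #D ≤ s)
    (hc : ∀ p : MvPolynomial σ K, p.totalDegree ≤ s → weightedEval pt c p = 0) : c = 0 := by
  have hvanish := sum_sum_mul_eq_zero_of_mem_productKernels pt c hc
    (productKernels_mono (by omega) (sqDistKernel_mem_productKernels D))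
  rw [sum_sum_mul_sqDistKernel pt c D hD] at hvanish
  have hsq : ∑ a, c a ^ 2 = 0 :=
    (mul_eq_zero.mp hvanish).resolve_left (prod_ne_zero_iff.mpr fun r hr h => hD0 (h ▸ hr))
  funext a
  exact pow_eq_zero_iff two_ne_zero |>.mp <|
    (sum_eq_zero_iff_of_nonneg fun a _ => sq_nonneg (c a)).mp hsq a (mem_univ a)

theorem exists_finset_sum_sq_sub_mem {n : ℕ} (A : Finset (EuclideanSpace ℝ (Fin n))) :
    ∃ D : Finset ℝ, 0 ∉ D ∧ #D ≤ (distSet (A : Set (EuclideanSpace ℝ (Fin n)))).ncard ∧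
      ∀ a ∈ A, ∀ b ∈ A, a ≠ b → ∑ i, (a i - b i) ^ 2 ∈ D := by
  classical
  let dists := A.offDiag.image fun p => dist p.1 p.2
  have hdists : (dists : Set ℝ) = distSet (A : Set (EuclideanSpace ℝ (Fin n))) := by
    ext d
    simp [dists, distSet, and_assoc]
  refine ⟨dists.image (· ^ 2), ?_, ?_, fun a ha b hb hab => ?_⟩
  · simp [dists]
  · rw [← hdists, Set.ncard_coe_finset]
    exact card_image_le
  · have hsq : ∑ i, (a i - b i) ^ 2 = dist a b ^ 2 := by
      rw [EuclideanSpace.dist_eq, Real.sq_sqrt (by positivity)]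
      simp [Real.dist_eq]
    rw [hsq]
    exact mem_image.mpr ⟨dist a b, mem_image.mpr ⟨(a, b), mem_offDiag.mpr ⟨ha, hb, hab⟩, rfl⟩, rfl⟩

/-- Bound for `s`-distance sets in a box `T₁ × ⋯ × Tₙ` with `|Tᵢ| = q`:
`|A|` is at most the number of exponent vectors `α` with `αᵢ ≤ q−1` and `∑ αᵢ ≤ s`. -/
theorem sdist_in_box {n s q : ℕ} (hq : 2 ≤ q) (T : Fin n → Finset ℝ)
    (hT : ∀ i, (T i).card = q)
    (A : Finset (EuclideanSpace ℝ (Fin n)))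
    (hbox : ∀ a ∈ A, ∀ i, a i ∈ T i)
    (hA : (distSet (A : Set (EuclideanSpace ℝ (Fin n)))).ncard ≤ s) :
    A.card ≤ (Finset.univ.filter
      (fun α : Fin n → Fin q => ∑ i, (α i : ℕ) ≤ s)).card := by
  classical
  obtain ⟨D, hD0, hDA, hD⟩ := exists_finset_sum_sq_sub_mem A
  let S := univ.filter fun α : Fin n → Fin q => ∑ i, (α i : ℕ) ≤ s
  let pt : A → Fin n → ℝ := fun a => (a : EuclideanSpace ℝ (Fin n)).ofLp
  let M : Matrix A S ℝ := Matrix.of fun a α => eval (pt a) (∏ i, X i ^ (α.1 i : ℕ))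
  have hinj : Function.Injective M.vecMulLinear := by
    refine (injective_iff_map_eq_zero _).mpr fun c hc => ?_
    refine eq_zero_of_weightedEval_eq_zero pt c D hD0
      (fun a b hab => hD a a.2 b b.2 (Subtype.coe_injective.ne hab)) (hDA.trans hA) fun p hp => ?_
    refine weightedEval_eq_zero_of_totalDegree_le pt c T
      (fun i => card_pos.mp (by rw [hT i]; omega)) (fun a => hbox a a.2) (fun β hβ hβs => ?_) hp
    have hcβ := congrFun hc ⟨fun i => ⟨β i, hT i ▸ hβ i⟩, mem_filter.mpr ⟨mem_univ _, hβs⟩⟩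
    simpa [M, Matrix.vecMul, dotProduct] using hcβ
  simpa [S, Fintype.card_subtype] using LinearMap.finrank_le_finrank_of_injective hinj
end
end

section
/- The set of 0,1-vectors of even Hamming weight in ℝ^{2m} is an m-distance set of size 2^{2m−1}. -/
noncomputable section

open Finset in
/-- Number of even-cardinality subsets of a `2m`-element set. -/
lemma even_card_subsets_count (m : ℕ) :
    (Finset.univ.filter fun s : Finset (Fin (2*m)) => Even s.card).card = 2^(2*m-1) := by
  rcases Nat.eq_zero_or_pos m with rfl | hm
  · decide
  set n := 2*m with hn
  have hi : (0:ℕ) < n := by omega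
  set i0 : Fin n := ⟨0, hi⟩
  set f : Finset (Fin n) → Finset (Fin n) :=
    fun s => if i0 ∈ s then s.erase i0 else insert i0 s with hf
  have hcard : ∀ s : Finset (Fin n), Even s.card ↔ ¬ Even (f s).card := by
    intro s
    by_cases h : i0 ∈ s
    · simp only [hf, if_pos h, card_erase_of_mem h]
      have : 0 < s.card := card_pos.2 ⟨i0, h⟩
      rw [Nat.even_sub (by omega)]
      simp [Nat.even_iff, Nat.odd_iff]
    · simp only [hf, if_neg h, card_insert_of_notMem h]
      simp [Nat.even_add_one]
  have hff : ∀ s : Finset (Fin n), f (f s) = s := by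
    intro s
    by_cases h : i0 ∈ s
    · simp [hf, h, insert_erase h]
    · simp [hf, h, erase_insert h]
  have key : (Finset.univ.filter fun s : Finset (Fin n) => Even s.card).card
      = (Finset.univ.filter fun s : Finset (Fin n) => ¬ Even s.card).card := by
    apply Finset.card_bij' (fun s _ => f s) (fun s _ => f s)
    · intro s hs
      simp only [mem_filter, mem_univ, true_and] at hs ⊢
      exact (hcard s).1 hs
    · intro s hs
      simp only [mem_filter, mem_univ, true_and] at hs ⊢
      exact (hcard (f s)).2 (by rw [hff]; exact hs)
    · intro s _; exact hff s
    · intro s _; exact hff s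
  have htot := Finset.card_filter_add_card_filter_not
    (s := (Finset.univ : Finset (Finset (Fin n)))) (p := fun s => Even s.card)
  rw [Finset.card_univ] at htot
  have h2n : Fintype.card (Finset (Fin n)) = 2^n := by
    simp [Fintype.card_finset]
  have : 2^n = 2^(n-1) * 2 := by
    rw [← pow_succ]; congr 1; omega
  omega

/-- The set of `0,1`-vectors in `ℝ^{2m}` of even Hamming weight is an `m`-distance
set of size `2^{2m−1}`. -/
theorem even_weight_extremal (m : ℕ) :
    (distSet {x : EuclideanSpace ℝ (Fin (2 * m)) |
        (∀ i, x i = 0 ∨ x i = 1) ∧ Even ({i | x i = 1}.ncard)}).ncard ≤ m ∧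
    ({x : EuclideanSpace ℝ (Fin (2 * m)) |
        (∀ i, x i = 0 ∨ x i = 1) ∧ Even ({i | x i = 1}.ncard)}).ncard
      = 2 ^ (2 * m - 1) := by
  classical
  open Finset in
  constructor
  · -- distance bound
    set n := 2*m with hn
    have hsub : distSet {x : EuclideanSpace ℝ (Fin n) |
          (∀ i, x i = 0 ∨ x i = 1) ∧ Even ({i | x i = 1}.ncard)}
        ⊆ (fun k : ℕ => Real.sqrt (2*k)) '' (Set.Icc 1 m) := by
      rintro d ⟨p, ⟨hp, hpe⟩, q, ⟨hq, hqe⟩, hpq, rfl⟩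
      set D := Finset.univ.filter (fun i => p i ≠ q i) with hD
      have hdist : dist p q = Real.sqrt (D.card) := by
        rw [EuclideanSpace.dist_eq]
        congr 1
        have h : ∀ i ∈ Finset.univ, dist (p i) (q i)^2 = if p i ≠ q i then (1:ℝ) else 0 := by
          intro i _
          rcases hp i with h1 | h1 <;> rcases hq i with h2 | h2 <;>
            simp [Real.dist_eq, h1, h2]
        rw [Finset.sum_congr rfl h, Finset.sum_ite, Finset.sum_const, Finset.sum_const]
        simp [hD]
      set sp := Finset.univ.filter (fun i => p i = 1) with hsp
      set sq := Finset.univ.filter (fun i => q i = 1) with hsq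
      have hpev : Even sp.card := by
        have : {i | p i = 1} = ↑sp := by ext i; simp [hsp]
        rwa [this, Set.ncard_coe_finset] at hpe
      have hqev : Even sq.card := by
        have : {i | q i = 1} = ↑sq := by ext i; simp [hsq]
        rwa [this, Set.ncard_coe_finset] at hqe
      have hDsym : D = symmDiff sp sq := by
        ext i
        simp only [hD, hsp, hsq, mem_filter, mem_univ, true_and, Finset.mem_symmDiff]
        rcases hp i with h1 | h1 <;> rcases hq i with h2 | h2 <;> simp [h1, h2] <;> norm_num
      have hDev : Even D.card := by
        rw [hDsym]
        have h1 : symmDiff sp sq = (sp ∪ sq) \ (sp ∩ sq) := by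
          ext i; simp [symmDiff_def]; tauto
        have hsub2 : sp ∩ sq ⊆ sp ∪ sq := (inter_subset_left).trans subset_union_left
        have h2 : (symmDiff sp sq).card + (sp ∩ sq).card = (sp ∪ sq).card := by
          rw [h1, card_sdiff_of_subset hsub2, Nat.sub_add_cancel (card_le_card hsub2)]
        have h3 := card_union_add_card_inter sp sq
        obtain ⟨a, ha⟩ := hpev; obtain ⟨b, hb⟩ := hqev
        rcases Nat.even_or_odd ((symmDiff sp sq).card) with h | h
        · exact h
        · obtain ⟨k, hk⟩ := h; omega
      have hDpos : 0 < D.card := by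
        rw [Finset.card_pos]
        by_contra h
        apply hpq
        refine PiLp.ext fun i => ?_
        by_contra hc
        exact h ⟨i, by simp [hD, hc]⟩
      have hDle : D.card ≤ n := by
        simpa using Finset.card_filter_le Finset.univ (fun i => p i ≠ q i)
      obtain ⟨k, hk⟩ := hDev
      refine ⟨k, ⟨by omega, by omega⟩, ?_⟩
      rw [hdist, hk]
      congr 1
      push_cast
      ring
    calc (distSet _).ncard ≤ ((fun k : ℕ => Real.sqrt (2*k)) '' (Set.Icc 1 m)).ncard :=
          Set.ncard_le_ncard hsub ((Set.finite_Icc 1 m).image _)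
      _ ≤ (Set.Icc 1 m).ncard := Set.ncard_image_le (Set.finite_Icc 1 m)
      _ = m := by rw [← Finset.coe_Icc, Set.ncard_coe_finset, Nat.card_Icc]; omega
  · -- cardinality
    set n := 2*m with hn
    set g : Finset (Fin n) → EuclideanSpace ℝ (Fin n) :=
      fun s => WithLp.toLp 2 (fun i => if i ∈ s then 1 else 0) with hg
    have hginj : Function.Injective g := by
      intro s t h
      ext i
      have := congrArg (fun x => x i) h
      simp only [hg, PiLp.toLp_apply] at this
      by_cases hi : i ∈ s <;> by_cases hj : i ∈ t <;> simp [hi, hj] at this ⊢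
    have hsupp : ∀ s : Finset (Fin n), {i | g s i = 1} = ↑s := by
      intro s; ext i
      simp only [hg, PiLp.toLp_apply, Set.mem_setOf_eq, mem_coe]
      constructor
      · intro h; by_contra hc; rw [if_neg hc] at h; norm_num at h
      · intro h; rw [if_pos h]
    have hA : {x : EuclideanSpace ℝ (Fin n) |
          (∀ i, x i = 0 ∨ x i = 1) ∧ Even ({i | x i = 1}.ncard)}
        = g '' ↑(Finset.univ.filter fun s : Finset (Fin n) => Even s.card) := by
      ext x
      constructor
      · rintro ⟨hx, hev⟩
        refine ⟨Finset.univ.filter fun i => x i = 1, ?_, ?_⟩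
        · simp only [Finset.coe_filter, Set.mem_setOf_eq, mem_filter, mem_univ, true_and]
          have : {i | x i = 1} = ↑(Finset.univ.filter fun i => x i = 1) := by
            ext i; simp
          rwa [this, Set.ncard_coe_finset] at hev
        · refine PiLp.ext fun i => ?_
          simp only [hg, PiLp.toLp_apply, mem_filter, mem_univ, true_and]
          rcases hx i with h | h <;> simp [h]
      · rintro ⟨s, hs, rfl⟩
        simp only [mem_coe, mem_filter, mem_univ, true_and] at hs
        refine ⟨fun i => ?_, ?_⟩
        · simp only [hg, PiLp.toLp_apply]; split <;> simp
        · rw [hsupp s, Set.ncard_coe_finset]; exact hs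
    rw [hA, Set.ncard_image_of_injective _ hginj, Set.ncard_coe_finset]
    exact even_card_subsets_count m
end
end

section
/- Let 0 ≤ d ≤ n and 0 ≤ s ≤ min(d, n−d) be integers, and let Y_{n,d} ⊆ ℝ^n be the set of 0,1-vectors with exactly d coordinates equal to 1. If A ⊆ Y_{n,d} is an s-distance set, then |A| ≤ C(n, s). -/
/-!
For `a ∈ A` put `f_a x = ∏_{r ∈ D} (‖a - x‖² - r²)`, where `D` is the set of nonzero distances
of `A`, so `|D| ≤ s`. Then `f_a b = 0` for `b ≠ a` while `f_a a ≠ 0`, hence the `f_a`, viewed as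
functions on `A`, are linearly independent. On `0,1`-vectors `x_i² = x_i`, so `‖a - x‖²` is affine
in `x` and `f_a` is a combination of squarefree monomials `∏_{i ∈ I} x_i` with `|I| ≤ s`. Since
`∑ x_i = d` on `A`, every such monomial with `|I| < s ≤ d` equals
`(d - |I|)⁻¹ ∑_{j ∉ I} ∏_{i ∈ I ∪ {j}} x_i`, so all `f_a` lie in the span of the `C(n, s)`
monomials of degree exactly `s`.
-/

noncomputable section

namespace RayChaudhuriWilson

open Finset Submodule Module

section Monomials

variable {α ι : Type*} (v : α → ι → ℝ)

def monomialFun (I : Finset ι) : α → ℝ := fun x => ∏ i ∈ I, v x i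

def lowDegreeSpan (k : ℕ) : Submodule ℝ (α → ℝ) :=
  span ℝ (monomialFun v '' {I | #I ≤ k})

def homogeneousSpan (k : ℕ) : Submodule ℝ (α → ℝ) :=
  span ℝ (monomialFun v '' {I | #I = k})

variable {v}

theorem monomialFun_empty : monomialFun v ∅ = 1 := by
  ext x; simp [monomialFun]

theorem monomialFun_insert [DecidableEq ι] (hv : ∀ x i, IsIdempotentElem (v x i)) (i : ι)
    (I : Finset ι) : monomialFun v (insert i I) = (fun x => v x i) * monomialFun v I := by
  ext x
  by_cases hi : i ∈ I
  · rw [insert_eq_of_mem hi, Pi.mul_apply, monomialFun, ← mul_prod_erase I _ hi, ← mul_assoc,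
      (hv x i).eq]
  · exact prod_insert hi

theorem monomialFun_mul_monomialFun [DecidableEq ι] (hv : ∀ x i, IsIdempotentElem (v x i))
    (I J : Finset ι) : monomialFun v I * monomialFun v J = monomialFun v (I ∪ J) := by
  induction I using Finset.induction_on with
  | empty => rw [monomialFun_empty, one_mul, empty_union]
  | insert i I _ ih =>
    rw [monomialFun_insert hv, mul_assoc, ih, insert_union, monomialFun_insert hv]

theorem monomialFun_mem_lowDegreeSpan {I : Finset ι} {k : ℕ} (hI : #I ≤ k) :
    monomialFun v I ∈ lowDegreeSpan v k :=
  subset_span ⟨I, hI, rfl⟩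

theorem lowDegreeSpan_mono {k l : ℕ} (h : k ≤ l) : lowDegreeSpan v k ≤ lowDegreeSpan v l :=
  span_mono <| Set.image_mono fun _ hI => le_trans hI h

theorem lowDegreeSpan_mul_le (hv : ∀ x i, IsIdempotentElem (v x i)) (k l : ℕ) :
    lowDegreeSpan v k * lowDegreeSpan v l ≤ lowDegreeSpan v (k + l) := by
  classical
  rw [lowDegreeSpan, lowDegreeSpan, span_mul_span, span_le]
  rintro _ ⟨_, ⟨I, hI, rfl⟩, _, ⟨J, hJ, rfl⟩, rfl⟩
  simp only [monomialFun_mul_monomialFun hv]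
  exact monomialFun_mem_lowDegreeSpan <| (card_union_le I J).trans (add_le_add hI hJ)

theorem prod_mem_lowDegreeSpan (hv : ∀ x i, IsIdempotentElem (v x i)) {β : Type*}
    (L : Finset β) {f : β → α → ℝ} (hf : ∀ b ∈ L, f b ∈ lowDegreeSpan v 1) :
    ∏ b ∈ L, f b ∈ lowDegreeSpan v #L := by
  classical
  induction L using Finset.induction_on with
  | empty =>
    simpa [monomialFun_empty] using monomialFun_mem_lowDegreeSpan (v := v) (I := ∅) le_rfl
  | insert b L hb ih =>
    rw [prod_insert hb, card_insert_of_notMem hb, add_comm]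
    exact lowDegreeSpan_mul_le hv 1 #L <|
      mul_mem_mul (hf b (mem_insert_self b L)) (ih fun c hc => hf c (mem_insert_of_mem hc))

theorem sum_compl_monomialFun_insert [Fintype ι] [DecidableEq ι]
    (hv : ∀ x i, IsIdempotentElem (v x i)) {c : ℝ} (hc : ∀ x, ∑ i, v x i = c) (I : Finset ι) :
    ∑ j ∈ Iᶜ, monomialFun v (insert j I) = (c - #I) • monomialFun v I := by
  ext x
  have hI : ∀ j ∈ I, v x j * monomialFun v I x = monomialFun v I x := fun j hj => by
    rw [← Pi.mul_apply (fun x => v x j), ← monomialFun_insert hv, insert_eq_of_mem hj]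
  simp only [monomialFun_insert hv, Finset.sum_apply, Pi.mul_apply, Pi.smul_apply, smul_eq_mul]
  have hI' : (∑ j ∈ I, v x j) * monomialFun v I x = #I * monomialFun v I x := by
    rw [sum_mul, sum_congr rfl hI, sum_const, nsmul_eq_mul]
  rw [← sum_mul, ← hc x, ← sum_add_sum_compl I]
  linear_combination -hI'

theorem lowDegreeSpan_le_homogeneousSpan [Fintype ι] (hv : ∀ x i, IsIdempotentElem (v x i))
    {d s : ℕ} (hd : ∀ x, ∑ i, v x i = d) (hs : s ≤ d) :
    lowDegreeSpan v s ≤ homogeneousSpan v s := by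
  classical
  refine span_le.2 ?_
  rintro _ ⟨I, hI, rfl⟩
  refine strongDownwardInduction (p := fun I => monomialFun v I ∈ homogeneousSpan v s) ?_ I hI
  intro I ih hI
  obtain hIs | hIs := hI.eq_or_lt
  · exact subset_span ⟨I, hIs, rfl⟩
  have hne : (d : ℝ) - #I ≠ 0 := sub_ne_zero.2 (by exact_mod_cast (hIs.trans_le hs).ne')
  rw [← inv_smul_smul₀ hne (monomialFun v I), ← sum_compl_monomialFun_insert hv hd I]
  refine smul_mem _ _ (sum_mem fun j hj => ih ?_ (ssubset_insert (mem_compl.1 hj)))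
  rwa [card_insert_of_notMem (mem_compl.1 hj)]

theorem finrank_homogeneousSpan_le [Fintype ι] (k : ℕ) :
    finrank ℝ (homogeneousSpan v k) ≤ (Fintype.card ι).choose k := by
  classical
  have : monomialFun v '' {I | #I = k} = ↑((powersetCard k univ).image (monomialFun v)) := by
    ext; simp
  rw [homogeneousSpan, this, ← card_univ, ← card_powersetCard]
  exact (finrank_span_finset_le_card _).trans card_image_le

theorem dist_sq_sub_mem_lowDegreeSpan [Fintype ι] {p : α → EuclideanSpace ℝ ι}
    (hp : ∀ x i, IsIdempotentElem (p x i)) (a : EuclideanSpace ℝ ι) (c : ℝ) :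
    (fun x => dist a (p x) ^ 2 - c) ∈ lowDegreeSpan (fun x => ⇑(p x)) 1 := by
  have hexp : (fun x => dist a (p x) ^ 2 - c) =
      (∑ i, a i ^ 2 - c) • monomialFun (fun x => ⇑(p x)) ∅
        + ∑ i, (1 - 2 * a i) • monomialFun (fun x => ⇑(p x)) {i} := by
    ext x
    have hsq : ∀ i, (a i - p x i) ^ 2 = a i ^ 2 + (1 - 2 * a i) * p x i := fun i => by
      linear_combination (hp x i).eq
    simp [EuclideanSpace.dist_sq_eq, Real.dist_eq, monomialFun, hsq, sum_add_distrib]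
    ring
  rw [hexp]
  exact add_mem (smul_mem _ _ (monomialFun_mem_lowDegreeSpan (by simp)))
    (sum_mem fun i _ => smul_mem _ _ (monomialFun_mem_lowDegreeSpan (by simp)))

end Monomials

theorem card_le_finrank_of_diagonal {K α : Type*} [Field K] [Fintype α]
    {W : Submodule K (α → K)} {f : α → α → K} (hW : ∀ a, f a ∈ W) (hdiag : ∀ a, f a a ≠ 0)
    (hoff : ∀ a b, a ≠ b → f a b = 0) : Fintype.card α ≤ finrank K W := by
  classical
  have hf : f = fun a => Pi.single a (f a a) := by
    ext a b
    by_cases h : b = a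
    · subst h; simp
    · simp [h, hoff a b (Ne.symm h)]
  have hli : LinearIndependent K (W.subtype ∘ fun a => (⟨f a, hW a⟩ : W)) := by
    change LinearIndependent K f
    rw [hf]
    exact Pi.linearIndependent_single_of_ne_zero hdiag
  exact (LinearIndependent.of_comp W.subtype hli).fintype_card_le_finrank

theorem sum_eq_ncard_setOf_eq_one {ι : Type*} [Fintype ι] {p : ι → ℝ}
    (hp : ∀ i, p i = 0 ∨ p i = 1) : ∑ i, p i = {i | p i = 1}.ncard := by
  classical
  rw [Set.ncard_eq_toFinset_card', Set.toFinset_ofPred, ← sum_boole]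
  exact sum_congr rfl fun i _ => by rcases hp i with h | h <;> simp [h]

theorem finite_distSet {n : ℕ} {A : Set (EuclideanSpace ℝ (Fin n))} (hA : A.Finite) :
    (distSet A).Finite :=
  (hA.image2 dist hA).subset <| by
    rintro _ ⟨p, hp, q, hq, -, rfl⟩
    exact Set.mem_image2_of_mem hp hq

end RayChaudhuriWilson

open RayChaudhuriWilson Finset Module

theorem ray_chaudhuri_wilson_general {n d s : ℕ}
    (hsd : s ≤ d)
    (A : Finset (EuclideanSpace ℝ (Fin n)))
    (hY : ∀ a ∈ A, (∀ i, a i = 0 ∨ a i = 1) ∧ ({i | a i = 1}.ncard = d))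
    (hA : (distSet (A : Set (EuclideanSpace ℝ (Fin n)))).ncard ≤ s) :
    A.card ≤ n.choose s := by
  set v : A → Fin n → ℝ := fun x => ⇑(x : EuclideanSpace ℝ (Fin n))
  have hv : ∀ x i, IsIdempotentElem (v x i) := fun x i =>
    IsIdempotentElem.iff_eq_zero_or_one.2 ((hY x x.2).1 i)
  have hd : ∀ x, ∑ i, v x i = d := fun x =>
    (hY x x.2).2 ▸ sum_eq_ncard_setOf_eq_one (hY x x.2).1
  obtain ⟨D, hDA⟩ := (finite_distSet A.finite_toSet).exists_finset_coe
  have hD : #D ≤ s := by rwa [← Set.ncard_coe_finset, hDA]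
  have hD0 : ∀ r ∈ D, r ≠ 0 := by
    intro r hr
    obtain ⟨p, -, q, -, hpq, rfl⟩ := hDA ▸ (mem_coe.2 hr)
    exact dist_ne_zero.2 hpq
  let f : A → A → ℝ := fun a =>
    ∏ r ∈ D, fun x => dist (a : EuclideanSpace ℝ (Fin n)) x ^ 2 - r ^ 2
  calc A.card = Fintype.card A := (Fintype.card_coe A).symm
    _ ≤ finrank ℝ (homogeneousSpan v s) := card_le_finrank_of_diagonal (f := f) ?_ ?_ ?_
    _ ≤ n.choose s := by simpa using finrank_homogeneousSpan_le (v := v) s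
  · exact fun a => lowDegreeSpan_le_homogeneousSpan hv hd hsd <| lowDegreeSpan_mono hD <|
      prod_mem_lowDegreeSpan hv D fun r _ => dist_sq_sub_mem_lowDegreeSpan hv _ _
  · intro a
    simp only [f, prod_apply, dist_self]
    exact prod_ne_zero_iff.2 fun r hr => by simpa using hD0 r hr
  · intro a b hab
    simp only [f, prod_apply]
    refine prod_eq_zero (i := dist (a : EuclideanSpace ℝ (Fin n)) b) ?_ (sub_self _)
    rw [← mem_coe, hDA]
    exact ⟨a, a.2, b, b.2, Subtype.coe_ne_coe.2 hab, rfl⟩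

/-- Ray-Chaudhuri–Wilson bound: an `s`-distance set among the `0,1`-vectors of
Hamming weight exactly `d` has at most `C(n, s)` elements, provided
`s ≤ min(d, n−d)`. -/
theorem ray_chaudhuri_wilson {n d s : ℕ} (hdn : d ≤ n)
    (hsd : s ≤ d) (hsnd : s ≤ n - d)
    (A : Finset (EuclideanSpace ℝ (Fin n)))
    (hY : ∀ a ∈ A, (∀ i, a i = 0 ∨ a i = 1) ∧ ({i | a i = 1}.ncard = d))
    (hA : (distSet (A : Set (EuclideanSpace ℝ (Fin n)))).ncard ≤ s) :
    A.card ≤ n.choose s :=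
  ray_chaudhuri_wilson_general hsd A hY hA
end
end

section
/- Let T₁,…,Tₙ ⊆ F be finite sets and B = T₁ × ⋯ × Tₙ ⊆ F^n. Then the polynomials gᵢ(x) = ∏_{t∈Tᵢ}(xᵢ − t), for i = 1,…,n, generate the vanishing ideal I(B) of B in F[x₁,…,xₙ], and form a Gröbner basis of I(B) with respect to any term order. -/
/-!
A term order is well-founded (it extends the divisibility order, a well-quasi-order by Dickson's
lemma), so it is a `MonomialOrder` and the division algorithm applies. Each `gᵢ` is monic with
leading monomial `xᵢ^|Tᵢ|`, so dividing a polynomial `f` that vanishes on `B` by the `gᵢ` leaves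
a remainder of degree `< |Tᵢ|` in each `xᵢ` that still vanishes on `B`, hence is zero.
Thus `f = ∑ hᵢ gᵢ` with `lm(hᵢ gᵢ) ≤ lm(f)`; comparing the coefficients of `lm(f)` shows that
`lm(f) = lm(hᵢ) + lm(gᵢ)` for some `i`, so `lm(gᵢ)` divides `lm(f)`.
-/

noncomputable section

open MvPolynomial

/-- `lt` is (the strict order of) a term order on monomials in `n` variables:
a linear order in which `1` (i.e. the exponent vector `0`) is minimal and which
is compatible with multiplication of monomials (addition of exponent vectors). -/
def IsTermOrder {n : ℕ} (lt : (Fin n →₀ ℕ) → (Fin n →₀ ℕ) → Prop) : Prop :=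
  IsStrictTotalOrder (Fin n →₀ ℕ) lt ∧ (∀ m : Fin n →₀ ℕ, m ≠ 0 → lt 0 m) ∧
    ∀ u v w : Fin n →₀ ℕ, lt u v → lt (u + w) (v + w)

def IsLeadingMonomial {K : Type*} [CommSemiring K] {n : ℕ}
    (lt : (Fin n →₀ ℕ) → (Fin n →₀ ℕ) → Prop)
    (f : MvPolynomial (Fin n) K) (m : Fin n →₀ ℕ) : Prop :=
  m ∈ f.support ∧ ∀ m' ∈ f.support, m' ≠ m → lt m' m

open MonomialOrder
open scoped MonomialOrder

namespace IsTermOrder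

variable {n : ℕ} {lt : (Fin n →₀ ℕ) → (Fin n →₀ ℕ) → Prop}

theorem eq_or_lt_of_le (hlt : IsTermOrder lt) {a b : Fin n →₀ ℕ} (hab : a ≤ b) :
    a = b ∨ lt a b := by
  obtain ⟨c, rfl⟩ := exists_add_of_le hab
  rcases eq_or_ne c 0 with rfl | hc
  · exact Or.inl (add_zero a).symm
  · simpa [add_comm] using Or.inr (hlt.2.2 0 c a (hlt.2.1 c hc))

-- Dickson's lemma: pointwise `≤` is a well-quasi-order, and `lt` extends it.
theorem wellFounded (hlt : IsTermOrder lt) : WellFounded lt := by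
  have := hlt.1
  refine RelEmbedding.wellFounded_iff_isEmpty.2 ⟨fun f => ?_⟩
  obtain ⟨i, j, hij, hle⟩ := wellQuasiOrdered_le (α := Fin n →₀ ℕ) f
  have hji : lt (f j) (f i) := f.map_rel_iff.2 hij
  rcases hlt.eq_or_lt_of_le hle with h | h
  · exact irrefl_of lt (f j) (h ▸ hji)
  · exact asymm_of lt h hji

def toMonomialOrder (hlt : IsTermOrder lt) : MonomialOrder (Fin n) :=
  haveI := hlt.1
  letI := Classical.decRel lt
  { syn := Fin n →₀ ℕ
    linearOrderSyn := linearOrderOfSTO lt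
    isOrderedAddMonoid_syn :=
      @IsOrderedAddMonoid.mk _ _ (linearOrderOfSTO lt).toPreorder
        (fun a b hab c => hab.imp (congrArg (· + c)) (hlt.2.2 a b c))
        (fun a b hab c => by
          rw [add_comm c, add_comm c]
          exact hab.imp (congrArg (· + c)) (hlt.2.2 a b c))
    toSyn := AddEquiv.refl _
    toSyn_monotone := fun _ _ => hlt.eq_or_lt_of_le
    wellFoundedLT_syn := ⟨hlt.wellFounded⟩ }

theorem toMonomialOrder_lt_iff (hlt : IsTermOrder lt) {a b : Fin n →₀ ℕ} :
    a ≺[hlt.toMonomialOrder] b ↔ lt a b := Iff.rfl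

end IsTermOrder

open scoped Finset

theorem Finsupp.linearCombination_mem_span_range {α M R : Type*} [Semiring R] [AddCommMonoid M]
    [Module R M] (v : α → M) (c : α →₀ R) :
    Finsupp.linearCombination R v c ∈ Submodule.span R (Set.range v) :=
  Finsupp.range_linearCombination (M := M) R ▸ LinearMap.mem_range_self _ c

namespace MvPolynomial

variable {σ R : Type*} [CommRing R]

theorem eq_zero_of_eval_zero_at_prod_finset_of_lt [Finite σ] [IsDomain R]
    (P : MvPolynomial σ R) (S : σ → Finset R) (Hsupp : ∀ c ∈ P.support, ∀ i, c i < #(S i))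
    (Heval : ∀ x : σ → R, (∀ i, x i ∈ S i) → eval x P = 0) :
    P = 0 := by
  by_contra hP
  obtain ⟨c, hc⟩ := support_nonempty.2 hP
  refine hP (eq_zero_of_eval_zero_at_prod_finset P S (fun i => ?_) Heval)
  exact (degreeOf_lt_iff ((Nat.zero_le _).trans_lt (Hsupp c hc i))).2 fun d hd => Hsupp d hd i

theorem eval_eq_zero_of_mem_span_prod_X_sub_C {S : σ → Finset R} {f : MvPolynomial σ R}
    (hf : f ∈ Ideal.span (Set.range fun i => ∏ r ∈ S i, (X i - C r)))
    {x : σ → R} (hx : ∀ i, x i ∈ S i) : eval x f = 0 := by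
  refine RingHom.mem_ker.1 (Ideal.span_le.2 ?_ hf)
  rintro _ ⟨i, rfl⟩
  rw [SetLike.mem_coe, RingHom.mem_ker, map_prod]
  exact Finset.prod_eq_zero (hx i) (by simp)

end MvPolynomial

namespace MonomialOrder

variable {σ R : Type*} [CommRing R] (m : MonomialOrder σ)

theorem monic_prod_X_sub_C (i : σ) (S : Finset R) : m.Monic (∏ r ∈ S, (X i - C r)) :=
  Monic.prod fun r _ => m.monic_X_sub_C i r

theorem degree_prod_X_sub_C [Nontrivial R] (i : σ) (S : Finset R) :
    m.degree (∏ r ∈ S, (X i - C r)) = Finsupp.single i #S := by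
  rw [degree_prod_of_regular fun r _ => by rw [m.monic_X_sub_C]; exact isRegular_one]
  simp [m.degree_X_sub_C]

theorem exists_linearCombination_prod_X_sub_C_of_eval_zero [Finite σ] [IsDomain R]
    (S : σ → Finset R) (f : MvPolynomial σ R)
    (Heval : ∀ x : σ → R, (∀ i, x i ∈ S i) → eval x f = 0) :
    ∃ h : σ →₀ MvPolynomial σ R,
      (∀ i, m.degree ((∏ r ∈ S i, (X i - C r)) * h i) ≼[m] m.degree f) ∧
      f = Finsupp.linearCombination (MvPolynomial σ R) (fun i => ∏ r ∈ S i, (X i - C r)) h := by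
  obtain ⟨h, r, hf, hdeg, hr⟩ := m.div (b := fun i => ∏ r ∈ S i, (X i - C r))
    (fun i => by rw [(m.monic_prod_X_sub_C i (S i)).leadingCoeff_eq_one]; exact isUnit_one) f
  suffices r = 0 by exact ⟨h, hdeg, by rwa [this, add_zero] at hf⟩
  refine eq_zero_of_eval_zero_at_prod_finset_of_lt r S (fun c hc i => ?_) fun x hx => ?_
  · simpa [m.degree_prod_X_sub_C, Finsupp.single_le_iff] using hr c hc i
  · have hlin : eval x (Finsupp.linearCombination _ _ h) = 0 :=
      eval_eq_zero_of_mem_span_prod_X_sub_C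
        (Finsupp.linearCombination_mem_span_range _ h) hx
    rw [eq_sub_of_add_eq' hf.symm, map_sub, Heval x hx, hlin, sub_zero]

theorem exists_degree_le_of_eq_linearCombination [NoZeroDivisors R] {ι : Type*}
    (b : ι → MvPolynomial σ R) (h : ι →₀ MvPolynomial σ R) {f : MvPolynomial σ R} (hf0 : f ≠ 0)
    (hf : f = Finsupp.linearCombination (MvPolynomial σ R) b h)
    (hdeg : ∀ i, m.degree (b i * h i) ≼[m] m.degree f) :
    ∃ i, m.degree (b i) ≤ m.degree f := by
  have hlead : coeff (m.degree f) (Finsupp.linearCombination _ b h) ≠ 0 := by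
    rw [← hf]
    exact m.coeff_degree_ne_zero_iff.2 hf0
  rw [Finsupp.linearCombination_apply, Finsupp.sum, coeff_sum] at hlead
  obtain ⟨i, -, hi⟩ := Finset.exists_ne_zero_of_sum_ne_zero hlead
  rw [smul_eq_mul, mul_comm] at hi
  have hbh : b i * h i ≠ 0 := fun h0 => hi (by rw [h0, coeff_zero])
  have hdeg_eq : m.degree (b i * h i) = m.degree f :=
    m.toSyn.injective (le_antisymm (hdeg i) (m.le_degree (mem_support_iff.2 hi)))
  exact ⟨i, hdeg_eq ▸ m.degree_mul' hbh ▸ le_self_add⟩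

end MonomialOrder

theorem IsTermOrder.isLeadingMonomial_degree {n : ℕ} {lt : (Fin n →₀ ℕ) → (Fin n →₀ ℕ) → Prop}
    (hlt : IsTermOrder lt) {K : Type*} [CommSemiring K] {f : MvPolynomial (Fin n) K}
    (hf : f ≠ 0) :
    IsLeadingMonomial lt f (hlt.toMonomialOrder.degree f) :=
  ⟨degree_mem_support hf, fun _ hc hne =>
    hlt.toMonomialOrder_lt_iff.1 ((le_degree hc).lt_of_ne (AddEquiv.injective _ |>.ne hne))⟩

/-- The polynomials `gᵢ = ∏_{t ∈ Tᵢ} (xᵢ − t)` generate the vanishing ideal of the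
box `B = T₁ × ⋯ × Tₙ`, and they form a Gröbner basis of it with respect to any
term order (the leading monomial of some `gᵢ` divides, i.e. is pointwise `≤`, the
leading monomial of any nonzero polynomial vanishing on `B`). -/
theorem groebner_basis_of_box {K : Type*} [Field K] {n : ℕ} (T : Fin n → Finset K)
    (lt : (Fin n →₀ ℕ) → (Fin n →₀ ℕ) → Prop) (hlt : IsTermOrder lt) :
    (∀ f : MvPolynomial (Fin n) K,
        f ∈ Ideal.span (Set.range fun i => ∏ t ∈ T i, (X i - C t)) ↔
          ∀ x : Fin n → K, (∀ i, x i ∈ T i) → eval x f = 0) ∧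
    (∀ f : MvPolynomial (Fin n) K, f ≠ 0 →
        (∀ x : Fin n → K, (∀ i, x i ∈ T i) → eval x f = 0) →
        ∃ i : Fin n, ∃ mg mf : Fin n →₀ ℕ,
          IsLeadingMonomial lt (∏ t ∈ T i, (X i - C t)) mg ∧
          IsLeadingMonomial lt f mf ∧ mg ≤ mf) := by
  set m := hlt.toMonomialOrder
  refine ⟨fun f => ⟨fun hf x hx => eval_eq_zero_of_mem_span_prod_X_sub_C hf hx, fun hv => ?_⟩,
    fun f hf0 hv => ?_⟩
  · obtain ⟨h, -, rfl⟩ := m.exists_linearCombination_prod_X_sub_C_of_eval_zero T f hv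
    exact Finsupp.linearCombination_mem_span_range _ h
  · obtain ⟨h, hdeg, hf⟩ := m.exists_linearCombination_prod_X_sub_C_of_eval_zero T f hv
    obtain ⟨i, hi⟩ := m.exists_degree_le_of_eq_linearCombination _ h hf0 hf hdeg
    exact ⟨i, _, _, hlt.isLeadingMonomial_degree (m.monic_prod_X_sub_C i (T i)).ne_zero,
      hlt.isLeadingMonomial_degree hf0, hi⟩
end
end

section
/- Let I ⊆ ℝ[x₁,…,xₙ] be an ideal and A ⊆ ℝ^n a finite s-distance set such that every polynomial in I vanishes on A. Then |A| ≤ h_{ℝ[x]/I}(s), where h_{ℝ[x]/I}(s) = dim_ℝ (ℝ[x]_{≤s} / I_{≤s}) is the affine Hilbert function of ℝ[x]/I at s. -/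
/-!
Let `z : A → ℝ` be orthogonal to the restrictions to `A` of all polynomials of degree `≤ s`.
The kernel `F(a, b) = ∏_{d ∈ D} (d² - |a - b|²)`, `D` the set of distances of `A`, is a linear
combination of products `p(a) q(b)` with `deg p + deg q ≤ 2s`; in each of them one factor has
degree `≤ s`, so `∑_{a,b} z_a z_b F(a, b) = 0`. As `F` vanishes off the diagonal of `A`, this sum
is also `(∏ d²) ∑ z_a²`, whence `z = 0`. So evaluation `ℝ[x]_{≤s} → ℝ^A` is onto, and it factors
through `ℝ[x]_{≤s} / I_{≤s}` because `I` vanishes on `A`.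
-/

noncomputable section

open MvPolynomial

open Finset

theorem LinearMap.surjective_of_forall_sum_mul_eq_zero_s18 {K V α : Type*} [Field K] [Fintype α]
    [AddCommGroup V] [Module K V] (L : V →ₗ[K] α → K)
    (h : ∀ z : α → K, (∀ v, ∑ a, z a * L v a = 0) → z = 0) : Function.Surjective L := by
  classical
  rw [← LinearMap.range_eq_top]
  by_contra hL
  obtain ⟨f, hf0, hle⟩ := (LinearMap.range L).exists_le_ker_of_lt_top (lt_top_iff_ne_top.2 hL)
  have hz : (fun a => f fun j => if a = j then 1 else 0) = 0 := by
    refine h _ fun v => ?_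
    have := hle ⟨v, rfl⟩
    rw [LinearMap.mem_ker, LinearMap.pi_apply_eq_sum_univ] at this
    simpa only [smul_eq_mul, mul_comm] using this
  refine hf0 (LinearMap.ext fun w => ?_)
  rw [LinearMap.pi_apply_eq_sum_univ]
  simp only [funext_iff.1 hz, Pi.zero_apply, smul_zero, sum_const_zero, LinearMap.zero_apply]

namespace DistanceSet

variable {ι : Type*}

def productKernel (p q : MvPolynomial ι ℝ) : EuclideanSpace ℝ ι → EuclideanSpace ℝ ι → ℝ :=
  fun a b => eval (fun i => a i) p * eval (fun i => b i) q

def separableKernels (ι : Type*) (c : ℕ) :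
    Submodule ℝ (EuclideanSpace ℝ ι → EuclideanSpace ℝ ι → ℝ) :=
  Submodule.span ℝ
    {K | ∃ p q : MvPolynomial ι ℝ, p.totalDegree + q.totalDegree ≤ c ∧ K = productKernel p q}

theorem productKernel_mem_separableKernels {c : ℕ} {p q : MvPolynomial ι ℝ}
    (h : p.totalDegree + q.totalDegree ≤ c) : productKernel p q ∈ separableKernels ι c :=
  Submodule.subset_span ⟨p, q, h, rfl⟩

theorem separableKernels_mono {c c' : ℕ} (h : c ≤ c') :
    separableKernels ι c ≤ separableKernels ι c' := by
  refine Submodule.span_le.2 ?_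
  rintro _ ⟨p, q, hpq, rfl⟩
  exact productKernel_mem_separableKernels (hpq.trans h)

theorem separableKernels_mul_le (c c' : ℕ) :
    separableKernels ι c * separableKernels ι c' ≤ separableKernels ι (c + c') := by
  rw [separableKernels, separableKernels, Submodule.span_mul_span, Submodule.span_le]
  rintro _ ⟨_, ⟨p, q, hpq, rfl⟩, _, ⟨p', q', hpq', rfl⟩, rfl⟩
  have hdeg : (p * p').totalDegree + (q * q').totalDegree ≤ c + c' := by
    have := totalDegree_mul p p'
    have := totalDegree_mul q q'
    omega
  show _ * _ ∈ separableKernels ι (c + c')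
  convert productKernel_mem_separableKernels hdeg using 1
  ext a b
  simp only [productKernel, Pi.mul_apply, map_mul]
  ring

variable {E α : Type*} [Fintype α]

def pairing (x : α → E) (z : α → ℝ) : (E → E → ℝ) →ₗ[ℝ] ℝ :=
  ∑ a, ∑ b, (z a * z b) •
    (LinearMap.proj (R := ℝ) (φ := fun _ : E => ℝ) (x b)).comp (LinearMap.proj (x a))

theorem pairing_apply (x : α → E) (z : α → ℝ) (K : E → E → ℝ) :
    pairing x z K = ∑ a, ∑ b, z a * z b * K (x a) (x b) := by
  simp [pairing]

theorem separableKernels_le_ker_pairing {s : ℕ} {x : α → EuclideanSpace ℝ ι} {z : α → ℝ}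
    (hz : ∀ p : MvPolynomial ι ℝ, p.totalDegree ≤ s → ∑ a, z a * eval (fun i => x a i) p = 0) :
    separableKernels ι (2 * s) ≤ LinearMap.ker (pairing x z) := by
  refine Submodule.span_le.2 ?_
  rintro _ ⟨p, q, hpq, rfl⟩
  have hfactor : pairing x z (productKernel p q) =
      (∑ a, z a * eval (fun i => x a i) p) * ∑ b, z b * eval (fun i => x b i) q := by
    rw [pairing_apply, sum_mul_sum]
    exact sum_congr rfl fun _ _ => sum_congr rfl fun _ _ => by simp only [productKernel]; ring
  rw [SetLike.mem_coe, LinearMap.mem_ker, hfactor]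
  rcases le_total p.totalDegree s with hp | hp
  · rw [hz p hp, zero_mul]
  · rw [hz q (by omega), mul_zero]

variable [Fintype ι]

theorem sq_dist_eq (a b : EuclideanSpace ℝ ι) :
    dist a b ^ 2 = ∑ i, a i ^ 2 + ∑ i, b i ^ 2 - 2 * ∑ i, a i * b i := by
  rw [EuclideanSpace.dist_eq, Real.sq_sqrt (by positivity), mul_sum, ← sum_add_distrib,
    ← sum_sub_distrib]
  exact sum_congr rfl fun i _ => by rw [Real.dist_eq, sq_abs]; ring

theorem sub_sq_dist_mem_separableKernels (d : ℝ) :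
    (fun a b : EuclideanSpace ℝ ι => d ^ 2 - dist a b ^ 2) ∈ separableKernels ι 2 := by
  have hsplit : (fun a b : EuclideanSpace ℝ ι => d ^ 2 - dist a b ^ 2) =
      d ^ 2 • productKernel 1 1 - ∑ i, productKernel (X i ^ 2) 1
        - ∑ i, productKernel 1 (X i ^ 2) + (2 : ℝ) • ∑ i, productKernel (X i) (X i) := by
    ext a b
    simp only [productKernel, sq_dist_eq, mul_sum, Pi.add_apply, Pi.sub_apply, Pi.smul_apply,
      Finset.sum_apply, map_one, map_pow, eval_X, mul_one, one_mul, smul_eq_mul]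
    ring
  have hX : ∀ i, (X i : MvPolynomial ι ℝ).totalDegree = 1 := totalDegree_X
  have hX2 : ∀ i, (X i ^ 2 : MvPolynomial ι ℝ).totalDegree = 2 := fun i => totalDegree_X_pow i 2
  rw [hsplit]
  refine Submodule.add_mem _ (Submodule.sub_mem _ (Submodule.sub_mem _ ?_ ?_) ?_) ?_
  · exact Submodule.smul_mem _ _ (productKernel_mem_separableKernels (by simp))
  · exact Submodule.sum_mem _ fun i _ => productKernel_mem_separableKernels (by simp [hX2])
  · exact Submodule.sum_mem _ fun i _ => productKernel_mem_separableKernels (by simp [hX2])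
  · exact Submodule.smul_mem _ _
      (Submodule.sum_mem _ fun i _ => productKernel_mem_separableKernels (by simp [hX]))

theorem prod_sub_sq_dist_mem_separableKernels (D : Finset ℝ) :
    (fun a b : EuclideanSpace ℝ ι => ∏ d ∈ D, (d ^ 2 - dist a b ^ 2)) ∈
      separableKernels ι (2 * #D) := by
  classical
  induction D using Finset.induction_on with
  | empty =>
    have hone : productKernel (1 : MvPolynomial ι ℝ) 1 = fun _ _ => 1 := by
      ext
      simp [productKernel]
    simp only [prod_empty, card_empty, mul_zero]
    rw [← hone]
    exact productKernel_mem_separableKernels (by simp)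
  | insert d D hd ih =>
    have hmul := separableKernels_mul_le 2 (2 * #D)
      (Submodule.mul_mem_mul (sub_sq_dist_mem_separableKernels d) ih)
    rw [card_insert_of_notMem hd, mul_add_one, add_comm]
    convert hmul using 1
    ext a b
    simp only [prod_insert hd, Pi.mul_apply]

theorem pairing_prod_sub_sq_dist {x : α → EuclideanSpace ℝ ι} {D : Finset ℝ}
    (hD : ∀ a b, a ≠ b → dist (x a) (x b) ∈ D) (z : α → ℝ) :
    pairing x z (fun a b => ∏ d ∈ D, (d ^ 2 - dist a b ^ 2)) =
      (∏ d ∈ D, d ^ 2) * ∑ a, z a ^ 2 := by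
  classical
  rw [pairing_apply, mul_sum]
  refine sum_congr rfl fun a _ => ?_
  rw [sum_eq_single a]
  · simp only [dist_self, ne_eq, OfNat.ofNat_ne_zero, not_false_eq_true, zero_pow, sub_zero]
    ring
  · intro b _ hba
    rw [prod_eq_zero (hD a b hba.symm) (sub_self (dist (x a) (x b) ^ 2)), mul_zero]
  · simp

theorem eq_zero_of_sum_mul_eval_eq_zero {s : ℕ} {x : α → EuclideanSpace ℝ ι} {D : Finset ℝ}
    (hDs : #D ≤ s) (hD0 : 0 ∉ D) (hD : ∀ a b, a ≠ b → dist (x a) (x b) ∈ D) {z : α → ℝ}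
    (hz : ∀ p : MvPolynomial ι ℝ, p.totalDegree ≤ s → ∑ a, z a * eval (fun i => x a i) p = 0) :
    z = 0 := by
  have hker := separableKernels_le_ker_pairing hz
    (separableKernels_mono (by omega) (prod_sub_sq_dist_mem_separableKernels D))
  rw [LinearMap.mem_ker, pairing_prod_sub_sq_dist hD] at hker
  have hprod : ∏ d ∈ D, d ^ 2 ≠ 0 :=
    prod_ne_zero_iff.2 fun d hd => pow_ne_zero 2 (ne_of_mem_of_not_mem hd hD0)
  have hsq : ∑ a, z a ^ 2 = 0 := (mul_eq_zero.1 hker).resolve_left hprod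
  funext a
  exact pow_eq_zero_iff two_ne_zero |>.1
    ((sum_eq_zero_iff_of_nonneg fun b _ => sq_nonneg (z b)).1 hsq a (mem_univ a))

def evalOnDegreeLE (x : α → EuclideanSpace ℝ ι) (s : ℕ) :
    restrictTotalDegree ι ℝ s →ₗ[ℝ] α → ℝ :=
  LinearMap.pi fun a => (aeval fun i => x a i).toLinearMap ∘ₗ (restrictTotalDegree ι ℝ s).subtype

theorem evalOnDegreeLE_surjective {s : ℕ} {x : α → EuclideanSpace ℝ ι} {D : Finset ℝ}
    (hDs : #D ≤ s) (hD0 : 0 ∉ D) (hD : ∀ a b, a ≠ b → dist (x a) (x b) ∈ D) :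
    Function.Surjective (evalOnDegreeLE x s) :=
  LinearMap.surjective_of_forall_sum_mul_eq_zero_s18 _ fun _ hz =>
    eq_zero_of_sum_mul_eval_eq_zero hDs hD0 hD fun p hp =>
      hz ⟨p, (mem_restrictTotalDegree ι s p).2 hp⟩

end DistanceSet

theorem distSet_finite {n : ℕ} (A : Finset (EuclideanSpace ℝ (Fin n))) :
    (distSet (A : Set (EuclideanSpace ℝ (Fin n)))).Finite := by
  refine ((A.finite_toSet.prod A.finite_toSet).image fun pq => dist pq.1 pq.2).subset ?_
  rintro _ ⟨p, hp, q, hq, -, rfl⟩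
  exact ⟨(p, q), ⟨hp, hq⟩, rfl⟩

theorem zero_notMem_distSet {n : ℕ} (A : Set (EuclideanSpace ℝ (Fin n))) : 0 ∉ distSet A := by
  rintro ⟨p, -, q, -, hpq, hd⟩
  exact hpq (dist_eq_zero.1 hd)

open DistanceSet in
/-- Main theorem: if `A ⊆ ℝ^n` is a finite `s`-distance set on which every
polynomial of an ideal `I` vanishes, then `|A|` is at most the value at `s` of
the affine Hilbert function of `ℝ[x]/I`, i.e. `dim_ℝ (ℝ[x]_{≤s} / I_{≤s})`. -/
theorem sdist_le_hilbert_function {n s : ℕ}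
    (I : Ideal (MvPolynomial (Fin n) ℝ))
    (A : Finset (EuclideanSpace ℝ (Fin n)))
    (hA : (distSet (A : Set (EuclideanSpace ℝ (Fin n)))).ncard ≤ s)
    (hvan : ∀ f ∈ I, ∀ a ∈ A, eval (fun i => a i) f = 0) :
    A.card ≤ Module.finrank ℝ
      ((restrictTotalDegree (Fin n) ℝ s) ⧸
        (Submodule.comap (restrictTotalDegree (Fin n) ℝ s).subtype
          (Submodule.restrictScalars ℝ I))) := by
  have hfin := distSet_finite A
  have hsurj : Function.Surjective (evalOnDegreeLE ((↑) : A → EuclideanSpace ℝ (Fin n)) s) :=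
    evalOnDegreeLE_surjective (D := hfin.toFinset)
      (by rwa [← Set.ncard_eq_toFinset_card _ hfin])
      (by simpa using zero_notMem_distSet _)
      fun a b hab => hfin.mem_toFinset.2 ⟨a, a.2, b, b.2, Subtype.val_injective.ne hab, rfl⟩
  have hker : Submodule.comap (restrictTotalDegree (Fin n) ℝ s).subtype
      (Submodule.restrictScalars ℝ I) ≤
        LinearMap.ker (evalOnDegreeLE ((↑) : A → EuclideanSpace ℝ (Fin n)) s) :=
    fun p hp => funext fun a => hvan p hp a a.2
  calc A.card = Module.finrank ℝ (A → ℝ) := by simp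
    _ ≤ _ := LinearMap.finrank_le_finrank_of_surjective (f := Submodule.liftQ _ _ hker) <| by
      rw [← LinearMap.range_eq_top, Submodule.range_liftQ, LinearMap.range_eq_top]
      exact hsurj
end
end

section
/- Let A ⊆ ℝ^n be a finite set and s ≥ 0 an integer. Let p(x, y) be a real polynomial in 2n variables of total degree at most 2s+1, and let M be the |A| × |A| real symmetric-form matrix with entries M(a, b) = p(a, b) for a, b ∈ A. Then both the positive and negative inertia indices of the quadratic form f ↦ ∑_{a,b∈A} p(a,b) f(a) f(b) on ℝ^A are at most h_A(s), the dimension of the space of functions A → ℝ that are restrictions of polynomials of degree at most s. -/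
noncomputable section

open MvPolynomial Module

private def pairL {n : ℕ} (A : Finset (EuclideanSpace ℝ (Fin n)))
    (V : Submodule ℝ ({x // x ∈ A} → ℝ)) :
    ({x // x ∈ A} → ℝ) →ₗ[ℝ] (V →ₗ[ℝ] ℝ) where
  toFun f :=
    { toFun := fun v => ∑ a ∈ A.attach, (v : {x // x ∈ A} → ℝ) a * f a
      map_add' := by intro v w; simp [add_mul, Finset.sum_add_distrib]
      map_smul' := by intro c v; simp [Finset.mul_sum, mul_assoc] }
  map_add' := by intro f g; ext v; simp [mul_add, Finset.sum_add_distrib]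
  map_smul' := by intro c f; ext v; simp [Finset.mul_sum, mul_left_comm]

theorem pp_key {n s : ℕ} (A : Finset (EuclideanSpace ℝ (Fin n)))
    (p : MvPolynomial (Fin n ⊕ Fin n) ℝ) (hp : p.totalDegree ≤ 2 * s + 1)
    (W : Submodule ℝ ({x // x ∈ A} → ℝ))
    (hW : ∀ f ∈ W, f ≠ 0 →
        (∑ a ∈ A.attach, ∑ b ∈ A.attach,
          eval (Sum.elim (fun i => (a : EuclideanSpace ℝ (Fin n)) i)
            (fun i => (b : EuclideanSpace ℝ (Fin n)) i)) p * f a * f b) ≠ 0) :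
    Module.finrank ℝ W ≤ Module.finrank ℝ
      ((restrictTotalDegree (Fin n) ℝ s).map
        (LinearMap.pi fun a : {x // x ∈ A} =>
          (aeval (R := ℝ) (fun i => (a : EuclideanSpace ℝ (Fin n)) i)).toLinearMap)) := by
  set V := (restrictTotalDegree (Fin n) ℝ s).map
      (LinearMap.pi fun a : {x // x ∈ A} =>
        (aeval (R := ℝ) (fun i => (a : EuclideanSpace ℝ (Fin n)) i)).toLinearMap) with hV
  have key : ∀ f : {x // x ∈ A} → ℝ,
      (∀ v ∈ V, ∑ a ∈ A.attach, v a * f a = 0) →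
      (∑ a ∈ A.attach, ∑ b ∈ A.attach,
        eval (Sum.elim (fun i => (a : EuclideanSpace ℝ (Fin n)) i)
          (fun i => (b : EuclideanSpace ℝ (Fin n)) i)) p * f a * f b) = 0 := by
    intro f hf
    have hmono : ∀ α : Fin n → ℕ, (∑ i, α i) ≤ s →
        (∑ a ∈ A.attach, (∏ i, (a : EuclideanSpace ℝ (Fin n)) i ^ α i) * f a) = 0 := by
      intro α hα
      refine hf (fun a => ∏ i, (a : EuclideanSpace ℝ (Fin n)) i ^ α i) ?_
      refine ⟨∏ i, (X i : MvPolynomial (Fin n) ℝ) ^ α i, ?_, ?_⟩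
      · rw [SetLike.mem_coe, mem_restrictTotalDegree]
        calc (∏ i, (X i : MvPolynomial (Fin n) ℝ) ^ α i).totalDegree
            ≤ ∑ i, ((X i : MvPolynomial (Fin n) ℝ) ^ α i).totalDegree :=
              totalDegree_finset_prod _ _
          _ ≤ ∑ i, α i := by
              refine Finset.sum_le_sum fun i _ => ?_
              simp [totalDegree_X_pow]
          _ ≤ s := hα
      · funext a
        simp [LinearMap.pi_apply, map_prod, map_pow]
    have hcalc : (∑ a ∈ A.attach, ∑ b ∈ A.attach,
        eval (Sum.elim (fun i => (a : EuclideanSpace ℝ (Fin n)) i)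
          (fun i => (b : EuclideanSpace ℝ (Fin n)) i)) p * f a * f b)
        = ∑ d ∈ p.support, coeff d p *
            (∑ a ∈ A.attach, (∏ i, (a : EuclideanSpace ℝ (Fin n)) i ^ d (Sum.inl i)) * f a) *
            (∑ b ∈ A.attach, (∏ i, (b : EuclideanSpace ℝ (Fin n)) i ^ d (Sum.inr i)) * f b) := by
      calc (∑ a ∈ A.attach, ∑ b ∈ A.attach,
          eval (Sum.elim (fun i => (a : EuclideanSpace ℝ (Fin n)) i)
            (fun i => (b : EuclideanSpace ℝ (Fin n)) i)) p * f a * f b)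
          = ∑ a ∈ A.attach, ∑ b ∈ A.attach, ∑ d ∈ p.support,
              coeff d p * ((∏ i, (a : EuclideanSpace ℝ (Fin n)) i ^ d (Sum.inl i)) * f a) *
                ((∏ i, (b : EuclideanSpace ℝ (Fin n)) i ^ d (Sum.inr i)) * f b) := by
            refine Finset.sum_congr rfl fun a _ => Finset.sum_congr rfl fun b _ => ?_
            rw [eval_eq', Finset.sum_mul, Finset.sum_mul]
            refine Finset.sum_congr rfl fun d _ => ?_
            rw [Fintype.prod_sum_type]
            simp only [Sum.elim_inl, Sum.elim_inr]
            ring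
        _ = ∑ a ∈ A.attach, ∑ d ∈ p.support, ∑ b ∈ A.attach,
              coeff d p * ((∏ i, (a : EuclideanSpace ℝ (Fin n)) i ^ d (Sum.inl i)) * f a) *
                ((∏ i, (b : EuclideanSpace ℝ (Fin n)) i ^ d (Sum.inr i)) * f b) :=
            Finset.sum_congr rfl fun a _ => Finset.sum_comm
        _ = ∑ d ∈ p.support, ∑ a ∈ A.attach, ∑ b ∈ A.attach,
              coeff d p * ((∏ i, (a : EuclideanSpace ℝ (Fin n)) i ^ d (Sum.inl i)) * f a) *
                ((∏ i, (b : EuclideanSpace ℝ (Fin n)) i ^ d (Sum.inr i)) * f b) :=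
            Finset.sum_comm
        _ = _ := by
            refine Finset.sum_congr rfl fun d _ => ?_
            rw [mul_assoc, Finset.sum_mul_sum, Finset.mul_sum]
            refine Finset.sum_congr rfl fun a _ => ?_
            rw [Finset.mul_sum]
            refine Finset.sum_congr rfl fun b _ => ?_
            ring
    rw [hcalc]
    refine Finset.sum_eq_zero fun d hd => ?_
    have hdeg : (∑ i, d (Sum.inl i)) + (∑ i, d (Sum.inr i)) ≤ 2 * s + 1 := by
      have h1 := le_totalDegree hd
      have h2 : (d.sum fun _ e => e) = ∑ i : Fin n ⊕ Fin n, d i :=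
        Finsupp.sum_fintype _ _ (fun _ => rfl)
      rw [h2, Fintype.sum_sum_type] at h1
      exact h1.trans hp
    by_cases hL : (∑ i, d (Sum.inl i)) ≤ s
    · rw [hmono _ hL]; ring
    · have hR : (∑ i, d (Sum.inr i)) ≤ s := by omega
      rw [hmono _ hR]; ring
  have hinj : Function.Injective ((pairL A V).domRestrict W) := by
    rw [← LinearMap.ker_eq_bot, eq_bot_iff]
    intro f hf0
    simp only [LinearMap.mem_ker, LinearMap.domRestrict_apply] at hf0
    rw [Submodule.mem_bot, Subtype.ext_iff]
    by_contra hne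
    refine hW f f.2 hne (key f fun v hv => ?_)
    have h2 : (pairL A V (f : {x // x ∈ A} → ℝ)) ⟨v, hv⟩ = 0 := by rw [hf0]; rfl
    exact h2
  calc Module.finrank ℝ W ≤ Module.finrank ℝ (V →ₗ[ℝ] ℝ) :=
        LinearMap.finrank_le_finrank_of_injective hinj
    _ = Module.finrank ℝ V := Module.finrank_linearMap_self ℝ ℝ V



/-- Petrov–Pohoata strengthening of the Croot–Lev–Pach lemma over `ℝ`:
for a finite set `A ⊆ ℝ^n` and a polynomial `p(x,y)` in `2n` variables of total
degree at most `2s+1`, both inertia indices of the quadratic form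
`f ↦ ∑_{a,b ∈ A} p(a,b) f(a) f(b)` on `ℝ^A` are at most `h_A(s)`, the dimension
of the space of functions `A → ℝ` that are restrictions of polynomials of degree
at most `s`. The inertia indices are expressed as maximal dimensions of
subspaces on which the form is positive (resp. negative) definite. -/
theorem petrov_pohoata {n s : ℕ} (A : Finset (EuclideanSpace ℝ (Fin n)))
    (p : MvPolynomial (Fin n ⊕ Fin n) ℝ) (hp : p.totalDegree ≤ 2 * s + 1) :
    ∀ W : Submodule ℝ ({x // x ∈ A} → ℝ),
      ((∀ f ∈ W, f ≠ 0 →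
          0 < ∑ a ∈ A.attach, ∑ b ∈ A.attach,
            eval (Sum.elim (fun i => (a : EuclideanSpace ℝ (Fin n)) i)
              (fun i => (b : EuclideanSpace ℝ (Fin n)) i)) p * f a * f b) →
        Module.finrank ℝ W ≤ Module.finrank ℝ
          ((restrictTotalDegree (Fin n) ℝ s).map
            (LinearMap.pi fun a : {x // x ∈ A} =>
              (aeval (R := ℝ) (fun i => (a : EuclideanSpace ℝ (Fin n)) i)).toLinearMap))) ∧
      ((∀ f ∈ W, f ≠ 0 →
          (∑ a ∈ A.attach, ∑ b ∈ A.attach,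
            eval (Sum.elim (fun i => (a : EuclideanSpace ℝ (Fin n)) i)
              (fun i => (b : EuclideanSpace ℝ (Fin n)) i)) p * f a * f b) < 0) →
        Module.finrank ℝ W ≤ Module.finrank ℝ
          ((restrictTotalDegree (Fin n) ℝ s).map
            (LinearMap.pi fun a : {x // x ∈ A} =>
              (aeval (R := ℝ) (fun i => (a : EuclideanSpace ℝ (Fin n)) i)).toLinearMap))) := by
  intro W
  constructor
  · intro hpos
    exact pp_key A p hp W fun f hfW hf0 => ne_of_gt (hpos f hfW hf0)
  · intro hneg
    exact pp_key A p hp W fun f hfW hf0 => ne_of_lt (hneg f hfW hf0)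
end
end
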